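/- arXiv:math/0410328 — 6 statements merged into one kernel-verified Lean document; each statement's English description precedes it below -/
import Mathlib

section
/- Let G be a group with a right action r on a type F, and let B be a type. Let Bun(G, B, F) be the category whose objects are G-bundles over B with fibre F and whose morphisms are G-bundle morphisms, with composition (f, b) followed by (f', b') given by (f' ∘ f, b;b') and identity on E given by (id_E, g). Let Trans(G, B) be the category whose objects are pairs of a surjective function j : U → B together with a G-transition g on (U, j), whose morphisms are G-transition morphisms, composed by b;b', with each g serving as its own identity. Then the forgetful functor Bun(G, B, F) → Trans(G, B), sending a G-bundle to its underlying pair (cover, G-transition) and a G-bundle morphism (f, b) to b, is an equivalence of categories. -/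
universe u

open CategoryTheory

structure GTransition (G : Type u) [Group G] {U B : Type u} (j : U → B) where
  g : ∀ x y : U, j x = j y → G
  cocycle : ∀ (x y z : U) (hxy : j x = j y) (hyz : j y = j z),
    g x y hxy * g y z hyz = g x z (hxy.trans hyz)

structure GTransMor {G : Type u} [Group G] {B U U' : Type u} {j : U → B} {j' : U' → B}
    (t : GTransition G j) (t' : GTransition G j') where
  b : ∀ (x : U) (x' : U'), j x = j' x' → G
  sigma : ∀ (x y : U) (x' : U') (hxy : j x = j y) (hyx' : j y = j' x'),
    t.g x y hxy * b y x' hyx' = b x x' (hxy.trans hyx')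
  delta : ∀ (x : U) (x' y' : U') (hxx' : j x = j' x') (hx'y' : j' x' = j' y'),
    b x x' hxx' * t'.g x' y' hx'y' = b x y' (hxx'.trans hx'y')

theorem GTransMor.ext' {G : Type u} [Group G] {B U U' : Type u} {j : U → B} {j' : U' → B}
    {t : GTransition G j} {t' : GTransition G j'} {bb cc : GTransMor t t'}
    (h : bb.b = cc.b) : bb = cc := by
  cases bb; cases cc; cases h; rfl

theorem GTransMor.bCongrFst {G : Type u} [Group G] {B U U' : Type u} {j : U → B}
    {j' : U' → B} {t : GTransition G j} {t' : GTransition G j'}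
    (bb : GTransMor t t') {x y : U} (e : x = y) (z : U') (h : j x = j' z) :
    bb.b x z h = bb.b y z (by rw [← e]; exact h) := by
  cases e; rfl

theorem GTransMor.bCongrSnd {G : Type u} [Group G] {B U U' : Type u} {j : U → B}
    {j' : U' → B} {t : GTransition G j} {t' : GTransition G j'}
    (bb : GTransMor t t') (x : U) {y z : U'} (e : y = z) (h : j x = j' y) :
    bb.b x y h = bb.b x z (by rw [← e]; exact h) := by
  cases e; rfl
noncomputable def GTransMor.comp {G : Type u} [Group G] {B U U' U'' : Type u}
    {j : U → B} {j' : U' → B} {j'' : U'' → B}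
    {t : GTransition G j} {t' : GTransition G j'} {t'' : GTransition G j''}
    (hj' : Function.Surjective j')
    (bb : GTransMor t t') (bb' : GTransMor t' t'') : GTransMor t t'' where
  b x x'' h :=
    bb.b x (Function.surjInv hj' (j x)) (Function.surjInv_eq hj' (j x)).symm *
      bb'.b (Function.surjInv hj' (j x)) x'' ((Function.surjInv_eq hj' (j x)).trans h)
  sigma := by
    intro x y x'' hxy hyx''
    have hmx : j' (Function.surjInv hj' (j x)) = j x := Function.surjInv_eq hj' (j x)
    have hmy : j' (Function.surjInv hj' (j y)) = j y := Function.surjInv_eq hj' (j y)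
    have h1 : j' (Function.surjInv hj' (j y)) = j' (Function.surjInv hj' (j x)) := by
      rw [hmx, hmy, hxy]
    have h2 : j' (Function.surjInv hj' (j x)) = j'' x'' := by rw [hmx, hxy]; exact hyx''
    have e1 := bb'.sigma (Function.surjInv hj' (j y)) (Function.surjInv hj' (j x)) x'' h1 h2
    have e2 := bb.delta y (Function.surjInv hj' (j y)) (Function.surjInv hj' (j x))
      hmy.symm h1
    have e3 := bb.sigma x y (Function.surjInv hj' (j x)) hxy (hxy.symm.trans hmx.symm)
    calc t.g x y hxy *
          (bb.b y (Function.surjInv hj' (j y)) hmy.symm *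
            bb'.b (Function.surjInv hj' (j y)) x'' (hmy.trans hyx''))
        = t.g x y hxy *
          (bb.b y (Function.surjInv hj' (j y)) hmy.symm *
            (t'.g (Function.surjInv hj' (j y)) (Function.surjInv hj' (j x)) h1 *
              bb'.b (Function.surjInv hj' (j x)) x'' h2)) := by rw [e1]
      _ = t.g x y hxy *
          ((bb.b y (Function.surjInv hj' (j y)) hmy.symm *
            t'.g (Function.surjInv hj' (j y)) (Function.surjInv hj' (j x)) h1) *
              bb'.b (Function.surjInv hj' (j x)) x'' h2) := by rw [mul_assoc]
      _ = t.g x y hxy *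
          (bb.b y (Function.surjInv hj' (j x)) (hmy.symm.trans h1) *
              bb'.b (Function.surjInv hj' (j x)) x'' h2) := by rw [e2]
      _ = (t.g x y hxy * bb.b y (Function.surjInv hj' (j x)) (hmy.symm.trans h1)) *
              bb'.b (Function.surjInv hj' (j x)) x'' h2 := by rw [mul_assoc]
      _ = bb.b x (Function.surjInv hj' (j x)) (Function.surjInv_eq hj' (j x)).symm *
          bb'.b (Function.surjInv hj' (j x)) x''
            ((Function.surjInv_eq hj' (j x)).trans (hxy.trans hyx'')) := by rw [e3]
  delta := by
    intro x x'' y'' hxx'' hx''y''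
    rw [mul_assoc, bb'.delta (Function.surjInv hj' (j x)) x'' y''
      ((Function.surjInv_eq hj' (j x)).trans hxx'') hx''y'']

def GTransition.idMor {G : Type u} [Group G] {U B : Type u} {j : U → B}
    (t : GTransition G j) : GTransMor t t :=
  ⟨t.g, t.cocycle, t.cocycle⟩

structure TransObj (G B : Type u) [Group G] : Type (u + 1) where
  U : Type u
  j : U → B
  j_surj : Function.Surjective j
  t : GTransition G j

noncomputable instance transCategory (G B : Type u) [Group G] :
    Category.{u} (TransObj G B) where
  Hom X Y := GTransMor X.t Y.t
  id X := X.t.idMor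
  comp {_ Y _} f g := GTransMor.comp Y.j_surj f g
  id_comp := by
    intro X Y f
    apply GTransMor.ext'
    funext x x' h
    exact f.sigma x (Function.surjInv X.j_surj (X.j x)) x'
      (Function.surjInv_eq X.j_surj (X.j x)).symm
      ((Function.surjInv_eq X.j_surj (X.j x)).trans h)
  comp_id := by
    intro X Y f
    apply GTransMor.ext'
    funext x x' h
    exact f.delta x (Function.surjInv Y.j_surj (X.j x)) x'
      (Function.surjInv_eq Y.j_surj (X.j x)).symm
      ((Function.surjInv_eq Y.j_surj (X.j x)).trans h)
  assoc := by
    intro X Y Z W f g k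
    apply GTransMor.ext'
    funext x w hxw
    show (f.b x (Function.surjInv Y.j_surj (X.j x)) _ *
        g.b (Function.surjInv Y.j_surj (X.j x)) (Function.surjInv Z.j_surj (X.j x)) _) *
        k.b (Function.surjInv Z.j_surj (X.j x)) w _ =
      f.b x (Function.surjInv Y.j_surj (X.j x)) _ *
        (g.b (Function.surjInv Y.j_surj (X.j x))
            (Function.surjInv Z.j_surj (Y.j (Function.surjInv Y.j_surj (X.j x)))) _ *
          k.b (Function.surjInv Z.j_surj (Y.j (Function.surjInv Y.j_surj (X.j x)))) w _)
    have hN : Function.surjInv Z.j_surj (Y.j (Function.surjInv Y.j_surj (X.j x))) =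
        Function.surjInv Z.j_surj (X.j x) :=
      congrArg (Function.surjInv Z.j_surj) (Function.surjInv_eq Y.j_surj (X.j x))
    rw [g.bCongrSnd _ hN, k.bCongrFst hN w, mul_assoc]

structure RightAction (G : Type u) [Group G] (F : Type u) where
  r : F → G → F
  r_one : ∀ w : F, r w 1 = w
  r_mul : ∀ (w : F) (a c : G), r (r w a) c = r w (a * c)

structure IsGBundle {G B F U E : Type u} [Group G] (ρ : RightAction G F)
    {j : U → B} (t : GTransition G j) (p : E → B) (jt : F × U → E) : Prop where
  j_surj : Function.Surjective j
  p_jt : ∀ (w : F) (x : U), p (jt (w, x)) = j x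
  jt_inj : Function.Injective fun wx : F × U => (wx.2, jt wx)
  jt_range : Set.range (fun wx : F × U => (wx.2, jt wx)) = {xe : U × E | j xe.1 = p xe.2}
  theta : ∀ (w : F) (x y : U) (h : j x = j y), jt (ρ.r w (t.g x y h), y) = jt (w, x)

structure GBundle (G B F : Type u) [Group G] (ρ : RightAction G F) : Type (u + 1) where
  U : Type u
  j : U → B
  t : GTransition G j
  E : Type u
  p : E → B
  jt : F × U → E
  isBundle : IsGBundle ρ t p jt

structure GBundleMor {G B F : Type u} [Group G] {ρ : RightAction G F}
    (X Y : GBundle G B F ρ) where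
  f : X.E → Y.E
  b : GTransMor X.t Y.t
  p_f : ∀ e : X.E, Y.p (f e) = X.p e
  zeta : ∀ (w : F) (x : X.U) (x' : Y.U) (h : X.j x = Y.j x'),
    f (X.jt (w, x)) = Y.jt (ρ.r w (b.b x x' h), x')

theorem GBundleMor.ext' {G B F : Type u} [Group G] {ρ : RightAction G F}
    {X Y : GBundle G B F ρ} {m m' : GBundleMor X Y}
    (hf : m.f = m'.f) (hb : m.b = m'.b) : m = m' := by
  cases m; cases m'; cases hf; cases hb; rfl

noncomputable instance bunCategory (G B F : Type u) [Group G] (ρ : RightAction G F) :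
    Category.{u} (GBundle G B F ρ) where
  Hom X Y := GBundleMor X Y
  id X :=
    { f := fun e => e
      b := X.t.idMor
      p_f := fun _ => rfl
      zeta := fun w x x' h => (X.isBundle.theta w x x' h).symm }
  comp {X Y Z} m m' :=
    { f := fun e => m'.f (m.f e)
      b := GTransMor.comp Y.isBundle.j_surj m.b m'.b
      p_f := fun e => (m'.p_f (m.f e)).trans (m.p_f e)
      zeta := by
        intro w x x'' h
        show m'.f (m.f (X.jt (w, x))) = _
        rw [m.zeta w x (Function.surjInv Y.isBundle.j_surj (X.j x))
            (Function.surjInv_eq Y.isBundle.j_surj (X.j x)).symm,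
          m'.zeta _ (Function.surjInv Y.isBundle.j_surj (X.j x)) x''
            ((Function.surjInv_eq Y.isBundle.j_surj (X.j x)).trans h),
          ρ.r_mul]
        rfl }
  id_comp := by
    intro X Y m
    refine GBundleMor.ext' rfl (GTransMor.ext' ?_)
    funext x x' h
    exact m.b.sigma x (Function.surjInv X.isBundle.j_surj (X.j x)) x'
      (Function.surjInv_eq X.isBundle.j_surj (X.j x)).symm
      ((Function.surjInv_eq X.isBundle.j_surj (X.j x)).trans h)
  comp_id := by
    intro X Y m
    refine GBundleMor.ext' rfl (GTransMor.ext' ?_)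
    funext x x' h
    exact m.b.delta x (Function.surjInv Y.isBundle.j_surj (X.j x)) x'
      (Function.surjInv_eq Y.isBundle.j_surj (X.j x)).symm
      ((Function.surjInv_eq Y.isBundle.j_surj (X.j x)).trans h)
  assoc := by
    intro X Y Z W f g k
    refine GBundleMor.ext' rfl (GTransMor.ext' ?_)
    funext x w hxw
    show (f.b.b x (Function.surjInv Y.isBundle.j_surj (X.j x)) _ *
        g.b.b (Function.surjInv Y.isBundle.j_surj (X.j x))
          (Function.surjInv Z.isBundle.j_surj (X.j x)) _) *
        k.b.b (Function.surjInv Z.isBundle.j_surj (X.j x)) w _ =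
      f.b.b x (Function.surjInv Y.isBundle.j_surj (X.j x)) _ *
        (g.b.b (Function.surjInv Y.isBundle.j_surj (X.j x))
            (Function.surjInv Z.isBundle.j_surj
              (Y.j (Function.surjInv Y.isBundle.j_surj (X.j x)))) _ *
          k.b.b (Function.surjInv Z.isBundle.j_surj
              (Y.j (Function.surjInv Y.isBundle.j_surj (X.j x)))) w _)
    have hN : Function.surjInv Z.isBundle.j_surj
          (Y.j (Function.surjInv Y.isBundle.j_surj (X.j x))) =
        Function.surjInv Z.isBundle.j_surj (X.j x) :=
      congrArg (Function.surjInv Z.isBundle.j_surj)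
        (Function.surjInv_eq Y.isBundle.j_surj (X.j x))
    rw [g.b.bCongrSnd _ hN, k.b.bCongrFst hN w, mul_assoc]

/-- The forgetful functor sending a `G`-bundle to its underlying pair of a
(surjective) cover and a `G`-transition, and a `G`-bundle morphism `(f, b)` to `b`. -/
noncomputable def forgetBun (G B F : Type u) [Group G] (ρ : RightAction G F) :
    GBundle G B F ρ ⥤ TransObj G B where
  obj X := ⟨X.U, X.j, X.isBundle.j_surj, X.t⟩
  map {_ _} m := m.b
  map_id := by intros; rfl
  map_comp := by intros; rfl

theorem GTransition.g_self {G : Type u} [Group G] {U B : Type u} {j : U → B}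
    (t : GTransition G j) (x : U) (h : j x = j x) : t.g x x h = 1 := by
  have hc := t.cocycle x x x h h
  have : t.g x x h * t.g x x h = t.g x x h * 1 := by rw [mul_one]; exact hc
  exact mul_left_cancel this

theorem IsGBundle.jt_cancel {G B F U E : Type u} [Group G] {ρ : RightAction G F}
    {j : U → B} {t : GTransition G j} {p : E → B} {jt : F × U → E}
    (hB : IsGBundle ρ t p jt) {w w' : F} {x : U} (h : jt (w, x) = jt (w', x)) :
    w = w' := by
  have h2 : ((w, x) : F × U) = (w', x) :=
    hB.jt_inj (show ((x, jt (w, x)) : U × E) = (x, jt (w', x)) by rw [h])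
  exact (Prod.ext_iff.mp h2).1

theorem IsGBundle.exists_rep {G B F U E : Type u} [Group G] {ρ : RightAction G F}
    {j : U → B} {t : GTransition G j} {p : E → B} {jt : F × U → E}
    (hB : IsGBundle ρ t p jt) (e : E) (x : U) (h : j x = p e) :
    ∃ w, jt (w, x) = e := by
  have hx : (x, e) ∈ Set.range (fun wx : F × U => (wx.2, jt wx)) := by
    rw [hB.jt_range]; exact h
  obtain ⟨⟨w, y⟩, hw⟩ := hx
  simp only [Prod.mk.injEq] at hw
  obtain ⟨rfl, he⟩ := hw
  exact ⟨w, he⟩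

/-- The value `Y.jt (ρ.r w (bb.b x x' h), x')` depends only on `X.jt (w, x)`. -/
theorem jt_indep {G B F : Type u} [Group G] {ρ : RightAction G F}
    {X Y : GBundle G B F ρ} (bb : GTransMor X.t Y.t)
    (w w₀ : F) (x x₀ : X.U) (x' x₀' : Y.U)
    (h : X.j x = Y.j x') (h₀ : X.j x₀ = Y.j x₀')
    (he : X.jt (w, x) = X.jt (w₀, x₀)) :
    Y.jt (ρ.r w (bb.b x x' h), x') = Y.jt (ρ.r w₀ (bb.b x₀ x₀' h₀), x₀') := by
  have hxx₀ : X.j x = X.j x₀ := by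
    have := congrArg X.p he
    rwa [X.isBundle.p_jt, X.isBundle.p_jt] at this
  have he' : Y.j x' = Y.j x₀' := h.symm.trans (hxx₀.trans h₀)
  have hw₀ : ρ.r w (X.t.g x x₀ hxx₀) = w₀ :=
    X.isBundle.jt_cancel ((X.isBundle.theta w x x₀ hxx₀).trans he)
  calc Y.jt (ρ.r w (bb.b x x' h), x')
      = Y.jt (ρ.r (ρ.r w (bb.b x x' h)) (Y.t.g x' x₀' he'), x₀') :=
        (Y.isBundle.theta _ x' x₀' he').symm
    _ = Y.jt (ρ.r w (bb.b x x' h * Y.t.g x' x₀' he'), x₀') := by rw [ρ.r_mul]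
    _ = Y.jt (ρ.r w (bb.b x x₀' (h.trans he')), x₀') := by rw [bb.delta]
    _ = Y.jt (ρ.r w (X.t.g x x₀ hxx₀ * bb.b x₀ x₀' h₀), x₀') := by
        rw [bb.sigma x x₀ x₀' hxx₀ h₀]
    _ = Y.jt (ρ.r (ρ.r w (X.t.g x x₀ hxx₀)) (bb.b x₀ x₀' h₀), x₀') := by rw [ρ.r_mul]
    _ = Y.jt (ρ.r w₀ (bb.b x₀ x₀' h₀), x₀') := by rw [hw₀]

/-- Lifting a transition morphism to a bundle morphism. -/
noncomputable def liftMor {G B F : Type u} [Group G] {ρ : RightAction G F}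
    {X Y : GBundle G B F ρ} (bb : GTransMor X.t Y.t) : GBundleMor X Y where
  f e :=
    Y.jt (ρ.r (Classical.choose (X.isBundle.exists_rep e
          (Function.surjInv X.isBundle.j_surj (X.p e))
          (Function.surjInv_eq X.isBundle.j_surj (X.p e))))
        (bb.b (Function.surjInv X.isBundle.j_surj (X.p e))
          (Function.surjInv Y.isBundle.j_surj (X.p e))
          ((Function.surjInv_eq X.isBundle.j_surj (X.p e)).trans
            (Function.surjInv_eq Y.isBundle.j_surj (X.p e)).symm)),
      Function.surjInv Y.isBundle.j_surj (X.p e))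
  b := bb
  p_f e := by rw [Y.isBundle.p_jt, Function.surjInv_eq Y.isBundle.j_surj]
  zeta := by
    intro w x x' h
    exact jt_indep bb _ w _ x _ x' _ h
      (Classical.choose_spec (X.isBundle.exists_rep (X.jt (w, x)) _
        (Function.surjInv_eq X.isBundle.j_surj (X.p (X.jt (w, x))))))

/-- Every bundle morphism is determined by its transition morphism. -/
theorem GBundleMor.f_eq_lift {G B F : Type u} [Group G] {ρ : RightAction G F}
    {X Y : GBundle G B F ρ} (m : GBundleMor X Y) (e : X.E) :
    m.f e = (liftMor m.b).f e := by
  obtain ⟨w, hw⟩ := X.isBundle.exists_rep e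
      (Function.surjInv X.isBundle.j_surj (X.p e))
      (Function.surjInv_eq X.isBundle.j_surj (X.p e))
  conv_lhs => rw [← hw]
  rw [m.zeta w _ (Function.surjInv Y.isBundle.j_surj (X.p e))
      ((Function.surjInv_eq X.isBundle.j_surj (X.p e)).trans
        (Function.surjInv_eq Y.isBundle.j_surj (X.p e)).symm)]
  exact jt_indep m.b w _ _ _ _ _ _ _
    (hw.trans (Classical.choose_spec (X.isBundle.exists_rep e _
      (Function.surjInv_eq X.isBundle.j_surj (X.p e)))).symm)

/-- The setoid on `F × U` used to build a bundle from a transition. -/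
def transSetoid {G B F : Type u} [Group G] (ρ : RightAction G F) (T : TransObj G B) :
    Setoid (F × T.U) where
  r a b := ∃ h : T.j a.2 = T.j b.2, b.1 = ρ.r a.1 (T.t.g a.2 b.2 h)
  iseqv := by
    constructor
    · rintro ⟨w, x⟩
      exact ⟨rfl, by rw [T.t.g_self, ρ.r_one]⟩
    · rintro ⟨w, x⟩ ⟨w', x'⟩ ⟨h, hw⟩
      refine ⟨h.symm, ?_⟩
      rw [hw, ρ.r_mul, T.t.cocycle x x' x h h.symm, T.t.g_self, ρ.r_one]
    · rintro ⟨w, x⟩ ⟨w', x'⟩ ⟨w'', x''⟩ ⟨h, hw⟩ ⟨h', hw'⟩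
      refine ⟨h.trans h', ?_⟩
      rw [hw', hw, ρ.r_mul, T.t.cocycle x x' x'' h h']

/-- Building a bundle from a transition object. -/
noncomputable def mkBundle {G B : Type u} (F : Type u) [Group G] (ρ : RightAction G F)
    (T : TransObj G B) : GBundle G B F ρ where
  U := T.U
  j := T.j
  t := T.t
  E := Quotient (transSetoid ρ T)
  p := Quotient.lift (fun wx => T.j wx.2) (fun _ _ hab => hab.1)
  jt := Quotient.mk _
  isBundle :=
    { j_surj := T.j_surj
      p_jt := fun _ _ => rfl
      jt_inj := by
        letI : Setoid (F × T.U) := transSetoid ρ T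
        rintro ⟨w, x⟩ ⟨w', x'⟩ hww'
        simp only [Prod.mk.injEq] at hww'
        obtain ⟨rfl, he⟩ := hww'
        obtain ⟨h, hw⟩ := Quotient.exact he
        simp only [T.t.g_self, ρ.r_one] at hw
        rw [hw]
      jt_range := by
        ext ⟨x, e⟩
        constructor
        · rintro ⟨⟨w, y⟩, hh⟩
          simp only [Prod.mk.injEq] at hh
          obtain ⟨rfl, rfl⟩ := hh
          rfl
        · intro hx
          induction e using Quotient.inductionOn with
          | h wx =>
            obtain ⟨w', x'⟩ := wx
            have h : T.j x = T.j x' := hx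
            refine ⟨(ρ.r w' (T.t.g x' x h.symm), x), ?_⟩
            show ((x : T.U), (Quotient.mk (transSetoid ρ T) (ρ.r w' (T.t.g x' x h.symm), x)
              : _root_.Quotient (transSetoid ρ T))) = (x, Quotient.mk (transSetoid ρ T) (w', x'))
            refine congrArg (fun z => (x, z)) (Quot.sound ?_)
            refine ⟨h, ?_⟩
            show w' = ρ.r (ρ.r w' (T.t.g x' x h.symm)) (T.t.g x x' h)
            rw [ρ.r_mul, T.t.cocycle x' x x' h.symm h, T.t.g_self, ρ.r_one]
      theta := fun w x y h =>
        Quot.sound ((transSetoid ρ T).iseqv.symm ⟨h, rfl⟩) }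

/-- the forgetful functor from the category `Bun(G, B, F)` of
`G`-bundles over `B` with fibre `F` (morphisms `(f, b)`, composition
`(f' ∘ f, b;b')`, identities `(id, g)`) to the category `Trans(G, B)` of
`G`-transitions on surjective covers of `B` (morphisms the `G`-transition
morphisms, composition `b;b'`, identities `g`) is an equivalence of categories. -/
theorem stmt0 (G B F : Type u) [Group G] (ρ : RightAction G F) :
    (forgetBun G B F ρ).IsEquivalence := by
  refine { faithful := ?_, full := ?_, essSurj := ?_ }
  · refine ⟨fun {X Y} m m' hb => ?_⟩
    have hb' : m.b = m'.b := hb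
    refine GBundleMor.ext' ?_ hb'
    funext e
    rw [m.f_eq_lift e, m'.f_eq_lift e, hb']
  · exact ⟨fun {X Y} bb => ⟨liftMor bb, rfl⟩⟩
  · exact ⟨fun T => ⟨mkBundle F ρ T, ⟨Iso.refl T⟩⟩⟩
end

section
/- Let G be a group with a right action r on a type F, let g be a G-transition on (U, j) over a base type B, and let E = (F × U)/~ be the quotient of F × U by the relation ~, with quotient map ⟦·⟧. Then there is a well-defined function p : E → B with p ⟦(w, x)⟧ = j x for all w, x, and the map from F × U to {(x, e) in U × E : j x = p e} sending (w, x) to (x, ⟦(w, x)⟧) is a bijection. Moreover, if j is surjective, then the data (U, j, g, E, p, ⟦·⟧) constitute a G-bundle over B with fibre F (associated with the transition g). -/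
/-! The cocycle law makes `~` an equivalence relation with `g x x = 1`, so inside a single chart
`x` the class `⟦(w, x)⟧` determines `w`, and every class lying over `j x` meets the chart `x`
after transport by the transition `g y x`. -/

universe u

/-- The relation `(w, x) ~ (v, y) iff j x = j y and v = r w (g x y)` on `F × U`. -/
def bundleRel {G F U B : Type u} [Group G] (ρ : RightAction G F) {j : U → B}
    (t : GTransition G j) : F × U → F × U → Prop :=
  fun p q => ∃ h : j p.2 = j q.2, q.1 = ρ.r p.1 (t.g p.2 q.2 h)

namespace GTransition

variable {G U B : Type u} [Group G] {j : U → B} (t : GTransition G j)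

theorem g_self_s2 (x : U) (h : j x = j x) : t.g x x h = 1 :=
  mul_eq_left.mp (t.cocycle x x x h h)

end GTransition

namespace bundleRel

variable {G F U B : Type u} [Group G] (ρ : RightAction G F) {j : U → B} (t : GTransition G j)

theorem equivalence : Equivalence (bundleRel ρ t) where
  refl := fun ⟨w, x⟩ => ⟨rfl, by rw [t.g_self_s2, ρ.r_one]⟩
  symm := fun ⟨h, hv⟩ => ⟨h.symm, by rw [hv, ρ.r_mul, t.cocycle, t.g_self_s2, ρ.r_one]⟩
  trans := fun ⟨h₁, hv⟩ ⟨h₂, hu⟩ => ⟨h₁.trans h₂, by rw [hu, hv, ρ.r_mul, t.cocycle]⟩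

theorem mk_eq_mk_iff {a b : F × U} :
    Quot.mk (bundleRel ρ t) a = Quot.mk (bundleRel ρ t) b ↔ bundleRel ρ t a b :=
  Quot.eq.trans (equivalence ρ t).eqvGen_iff

theorem mk_r_g (w : F) (x y : U) (h : j x = j y) :
    Quot.mk (bundleRel ρ t) (ρ.r w (t.g x y h), y) = Quot.mk (bundleRel ρ t) (w, x) :=
  (Quot.sound ⟨h, rfl⟩).symm

def proj : Quot (bundleRel ρ t) → B :=
  Quot.lift (fun wx => j wx.2) fun _ _ h => h.1

theorem injective_snd_mk :
    Function.Injective fun wx : F × U => (wx.2, Quot.mk (bundleRel ρ t) wx) := by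
  rintro ⟨w, x⟩ ⟨v, y⟩ hxy
  obtain ⟨rfl, hwv⟩ := Prod.mk.inj hxy
  obtain ⟨_, hv⟩ := (mk_eq_mk_iff ρ t).mp hwv
  simp only [t.g_self_s2, ρ.r_one] at hv
  rw [hv]

theorem range_snd_mk :
    Set.range (fun wx : F × U => (wx.2, Quot.mk (bundleRel ρ t) wx)) =
      {xe : U × Quot (bundleRel ρ t) | j xe.1 = proj ρ t xe.2} := by
  ext ⟨x, e⟩
  constructor
  · rintro ⟨⟨w, y⟩, hxe⟩
    cases hxe
    rfl
  · intro hx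
    obtain ⟨⟨v, y⟩, rfl⟩ := Quot.exists_rep e
    have hxy : j x = j y := hx
    exact ⟨(ρ.r v (t.g y x hxy.symm), x), Prod.ext rfl (mk_r_g ρ t v y x hxy.symm)⟩

theorem isGBundle (hj : Function.Surjective j) :
    IsGBundle ρ t (proj ρ t) (Quot.mk (bundleRel ρ t)) where
  j_surj := hj
  p_jt _ _ := rfl
  jt_inj := injective_snd_mk ρ t
  jt_range := range_snd_mk ρ t
  theta := mk_r_g ρ t

end bundleRel

/-- on the quotient `E = (F × U)/~` there is a well-defined projection
`p` with `p ⟦(w, x)⟧ = j x`, the map `(w, x) ↦ (x, ⟦(w, x)⟧)` is a bijection from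
`F × U` onto `{(x, e) | j x = p e}`, and if `j` is surjective then the data
constitute a `G`-bundle over `B` with fibre `F` associated with `g`. -/
theorem stmt2 {G F U B : Type u} [Group G] (ρ : RightAction G F)
    {j : U → B} (t : GTransition G j) :
    ∃ p : Quot (bundleRel ρ t) → B,
      (∀ (w : F) (x : U), p (Quot.mk (bundleRel ρ t) (w, x)) = j x) ∧
      Function.Injective (fun wx : F × U => (wx.2, Quot.mk (bundleRel ρ t) wx)) ∧
      Set.range (fun wx : F × U => (wx.2, Quot.mk (bundleRel ρ t) wx)) =
        {xe : U × Quot (bundleRel ρ t) | j xe.1 = p xe.2} ∧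
      (Function.Surjective j →
        IsGBundle ρ t p (fun wx : F × U => Quot.mk (bundleRel ρ t) wx)) :=
  ⟨bundleRel.proj ρ t, fun _ _ => rfl, bundleRel.injective_snd_mk ρ t,
    bundleRel.range_snd_mk ρ t, bundleRel.isGBundle ρ t⟩
end

section
/- Let G be a group with a right action r on a type F, let g, g', g'' be G-transitions on (U, j), (U', j'), (U'', j'') over the same base type B, with j' and j'' surjective, and let b be a G-transition morphism from g to g' and b' a G-transition morphism from g' to g''. Let f_b : E → E', f_{b'} : E' → E'', and f_{b;b'} : E → E'' be the unique maps between the associated quotient bundles determined (as in the associated-bundle-morphism construction) by b, b', and the composite b;b' respectively. Then f_{b;b'} = f_{b'} ∘ f_b. -/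
universe u

/-- the associated-bundle-morphism construction is functorial:
if `f_b`, `f_{b'}` and `f_{b;b'}` are the unique maps between the associated quotient
bundles determined by `b`, `b'` and the composite `b;b'`, then `f_{b;b'} = f_{b'} ∘ f_b`. -/
theorem stmt4 {G F U U' U'' B : Type u} [Group G] (ρ : RightAction G F)
    {j : U → B} {j' : U' → B} {j'' : U'' → B}
    {t : GTransition G j} {t' : GTransition G j'} {t'' : GTransition G j''}
    (hj' : Function.Surjective j') (hj'' : Function.Surjective j'')
    (bb : GTransMor t t') (bb' : GTransMor t' t'')
    (fb : Quot (bundleRel ρ t) → Quot (bundleRel ρ t'))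
    (fb' : Quot (bundleRel ρ t') → Quot (bundleRel ρ t''))
    (fc : Quot (bundleRel ρ t) → Quot (bundleRel ρ t''))
    (hfb : ∀ (w : F) (x : U) (x' : U') (h : j x = j' x'),
      fb (Quot.mk (bundleRel ρ t) (w, x)) =
        Quot.mk (bundleRel ρ t') (ρ.r w (bb.b x x' h), x'))
    (hfb' : ∀ (w : F) (x' : U') (x'' : U'') (h : j' x' = j'' x''),
      fb' (Quot.mk (bundleRel ρ t') (w, x')) =
        Quot.mk (bundleRel ρ t'') (ρ.r w (bb'.b x' x'' h), x''))
    (hfc : ∀ (w : F) (x : U) (x'' : U'') (h : j x = j'' x''),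
      fc (Quot.mk (bundleRel ρ t) (w, x)) =
        Quot.mk (bundleRel ρ t'') (ρ.r w ((GTransMor.comp hj' bb bb').b x x'' h), x'')) :
    fc = fb' ∘ fb := by
  funext e
  induction e using Quot.ind with
  | _ p =>
    obtain ⟨w, x⟩ := p
    obtain ⟨x', hx'⟩ := hj' (j x)
    obtain ⟨x'', hx''⟩ := hj'' (j' x')
    have h1 : j x = j' x' := hx'.symm
    have h2 : j' x' = j'' x'' := hx''.symm
    simp only [Function.comp_apply, hfc w x x'' (h1.trans h2), hfb w x x' h1,
      hfb' _ x' x'' h2, ρ.r_mul]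
    have key : (GTransMor.comp hj' bb bb').b x x'' (h1.trans h2) =
        bb.b x x' h1 * bb'.b x' x'' h2 := by
      show bb.b x (Function.surjInv hj' (j x)) _ * bb'.b (Function.surjInv hj' (j x)) x'' _ = _
      set m := Function.surjInv hj' (j x) with hmdef
      have hm : j' m = j x := Function.surjInv_eq hj' (j x)
      have hmx' : j' m = j' x' := hm.trans h1
      rw [← bb'.sigma m x' x'' hmx' h2, ← mul_assoc,
        bb.delta x m x' hm.symm hmx']
    rw [key]
end

section
/- Small categories, anafunctors between them, and natural transformations between anafunctors form a bicategory, in which: the identity anafunctor on X has specification cover the identity on Ob X; the composite of anafunctors x : X → Y (with specifications S, cover j) and y : Y → Z (with specifications T, cover k) has specifications {(a, b) in S × T : k b = x₁ a} with cover (a, b) ↦ j a; and the vertical composite of natural transformations χ : x ⟹ y and ψ : y ⟹ z (all three anafunctors from X to Y) is given by (χ;ψ)(a, c) = χ(a, b) ≫ ψ(b, c) for any specification b of y whose underlying object equals that of a (this value being independent of the choice of b). -/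
universe u

open CategoryTheory


/-- A bundled small category. -/
structure SmallCat : Type (u + 1) where
  α : Type u
  str : SmallCategory α

attribute [instance] SmallCat.str

/-- An anafunctor between small categories: a specification type `S` with a surjective
cover of the objects of `X`, together with functorial object and morphism parts. -/
structure Anafunctor (X Y : SmallCat.{u}) : Type (u + 1) where
  S : Type u
  cov : S → X.α
  cov_surj : Function.Surjective cov
  obj : S → Y.α
  map : ∀ a b : S, (cov a ⟶ cov b) → (obj a ⟶ obj b)
  map_id : ∀ a : S, map a a (𝟙 (cov a)) = 𝟙 (obj a)
  map_comp : ∀ (a b c : S) (f : cov a ⟶ cov b) (g : cov b ⟶ cov c),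
    map a c (f ≫ g) = map a b f ≫ map b c g

/-- A natural transformation between anafunctors. -/
structure AnaNat {X Y : SmallCat.{u}} (x y : Anafunctor X Y) : Type u where
  app : ∀ (a : x.S) (b : y.S), x.cov a = y.cov b → (x.obj a ⟶ y.obj b)
  nat : ∀ (a a' : x.S) (b b' : y.S) (h : x.cov a = y.cov b) (h' : x.cov a' = y.cov b')
    (f : x.cov a ⟶ x.cov a'),
    x.map a a' f ≫ app a' b' h' =
      app a b h ≫ y.map b b' (eqToHom h.symm ≫ f ≫ eqToHom h')

/-- The identity anafunctor, whose specification cover is the identity. -/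
def anaId (X : SmallCat.{u}) : Anafunctor X X where
  S := X.α
  cov := id
  cov_surj := Function.surjective_id
  obj := id
  map := fun _ _ f => f
  map_id := fun _ => rfl
  map_comp := fun _ _ _ _ _ => rfl

/-- The composite of anafunctors, whose specifications are pairs `(a, b)` of
specifications with `k b = x₁ a`, covered by `(a, b) ↦ j a`. -/
def anaComp {X Y Z : SmallCat.{u}} (x : Anafunctor X Y) (y : Anafunctor Y Z) :
    Anafunctor X Z where
  S := {p : x.S × y.S // y.cov p.2 = x.obj p.1}
  cov := fun p => x.cov p.1.1
  cov_surj := by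
    intro a
    obtain ⟨s, hs⟩ := x.cov_surj a
    obtain ⟨t, ht⟩ := y.cov_surj (x.obj s)
    exact ⟨⟨(s, t), ht⟩, hs⟩
  obj := fun p => y.obj p.1.2
  map := fun p q f =>
    y.map p.1.2 q.1.2 (eqToHom p.2 ≫ x.map p.1.1 q.1.1 f ≫ eqToHom q.2.symm)
  map_id := by
    intro p
    try dsimp only
    rw [x.map_id]
    have h : eqToHom p.2 ≫ 𝟙 (x.obj p.1.1) ≫ eqToHom p.2.symm = 𝟙 (y.cov p.1.2) := by
      simp
    rw [h, y.map_id]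
  map_comp := by
    intro p q r f g
    try dsimp only
    rw [x.map_comp, ← y.map_comp]
    congr 1
    simp
/-!
A natural transformation `χ : x ⟹ y` has components not only along equalities `j a = k b`
but along arbitrary morphisms `u : j a ⟶ k b`: `χ.appOver a b u` is `χ` at some specification
over `j a` followed by `y` applied to `u`. Naturality makes this independent of the chosen
specification, just as it makes the vertical composite independent of the middle one. Left
whiskering is built from these components, and the whiskering axioms are checked componentwise.

The associator and the unitors are induced by maps of specifications commuting with covers,
object parts and morphism parts (`Anafunctor.Reindexing`). Such reindexings compose and are
stable under whiskering, so the pentagon and triangle identities reduce to equalities of maps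
of specifications, which hold definitionally.
-/

open Function

-- Lets `simp` and `rw` see specifications of a composite as pairs.
attribute [reducible] anaComp anaId

attribute [simp] Anafunctor.map_id

namespace Anafunctor

variable {X Y : SmallCat.{u}} (x : Anafunctor X Y)

@[simp]
theorem map_comp_map {a b c : x.S} (f : x.cov a ⟶ x.cov b) (g : x.cov b ⟶ x.cov c) :
    x.map a b f ≫ x.map b c g = x.map a c (f ≫ g) :=
  (x.map_comp a b c f g).symm

@[simp]
theorem map_comp_map_assoc {a b c : x.S} (f : x.cov a ⟶ x.cov b) (g : x.cov b ⟶ x.cov c)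
    {T : Y.α} (t : x.obj c ⟶ T) :
    x.map a b f ≫ x.map b c g ≫ t = x.map a c (f ≫ g) ≫ t := by
  rw [← Category.assoc, map_comp_map]

end Anafunctor

namespace AnaNat

variable {X Y : SmallCat.{u}} {x y z : Anafunctor X Y}

@[ext]
theorem ext {χ ψ : AnaNat x y} (w : ∀ a b h, χ.app a b h = ψ.app a b h) : χ = ψ := by
  cases χ; cases ψ
  congr
  funext a b h
  exact w a b h

variable (χ : AnaNat x y)

theorem app_comp_map_eqToHom {a : x.S} {b b' : y.S} (h : x.cov a = y.cov b)
    (e : y.cov b = y.cov b') :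
    χ.app a b h ≫ y.map b b' (eqToHom e) = χ.app a b' (h.trans e) := by
  simpa using (χ.nat a a b b' h (h.trans e) (𝟙 _)).symm

theorem map_eqToHom_comp_app {a a' : x.S} {b : y.S} (e : x.cov a = x.cov a')
    (h : x.cov a' = y.cov b) :
    x.map a a' (eqToHom e) ≫ χ.app a' b h = χ.app a b (e.trans h) := by
  simpa using χ.nat a a' b b (e.trans h) h (eqToHom e)

noncomputable def appOver (a : x.S) (b : y.S) (u : x.cov a ⟶ y.cov b) : x.obj a ⟶ y.obj b :=
  χ.app a (surjInv y.cov_surj (x.cov a)) (surjInv_eq _ _).symm ≫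
    y.map _ b (eqToHom (surjInv_eq _ _) ≫ u)

theorem appOver_eq {a : x.S} {b : y.S} (u : x.cov a ⟶ y.cov b) (b' : y.S)
    (hb' : y.cov b' = x.cov a) :
    χ.appOver a b u = χ.app a b' hb'.symm ≫ y.map b' b (eqToHom hb' ≫ u) := by
  rw [appOver, ← χ.app_comp_map_eqToHom hb'.symm (hb'.trans (surjInv_eq _ _).symm),
    Category.assoc, Anafunctor.map_comp_map]
  simp

@[simp]
theorem appOver_eqToHom {a : x.S} {b : y.S} (h : x.cov a = y.cov b) :
    χ.appOver a b (eqToHom h) = χ.app a b h := by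
  simp [χ.appOver_eq _ b h.symm]

@[simp]
theorem appOver_comp_map {a : x.S} {b b' : y.S} (u : x.cov a ⟶ y.cov b)
    (v : y.cov b ⟶ y.cov b') :
    χ.appOver a b u ≫ y.map b b' v = χ.appOver a b' (u ≫ v) := by
  simp [appOver]

@[simp]
theorem map_comp_appOver {a a' : x.S} {b : y.S} (f : x.cov a ⟶ x.cov a')
    (u : x.cov a' ⟶ y.cov b) :
    x.map a a' f ≫ χ.appOver a' b u = χ.appOver a b (f ≫ u) := by
  obtain ⟨b₀, hb₀⟩ := y.cov_surj (x.cov a)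
  obtain ⟨b₀', hb₀'⟩ := y.cov_surj (x.cov a')
  rw [χ.appOver_eq _ b₀' hb₀', χ.appOver_eq _ b₀ hb₀, ← Category.assoc,
    χ.nat a a' b₀ b₀' hb₀.symm hb₀'.symm f]
  simp

theorem app_comp_map {a : x.S} {b b' : y.S} (h : x.cov a = y.cov b) (v : y.cov b ⟶ y.cov b') :
    χ.app a b h ≫ y.map b b' v = χ.appOver a b' (eqToHom h ≫ v) := by
  rw [← appOver_eqToHom, appOver_comp_map]

protected def id (x : Anafunctor X Y) : AnaNat x x where
  app a b h := x.map a b (eqToHom h)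
  nat a a' b b' h h' f := by simp

@[simp]
theorem id_app (a b : x.S) (h : x.cov a = x.cov b) :
    (AnaNat.id x).app a b h = x.map a b (eqToHom h) :=
  rfl

theorem app_comp_app_eq (ψ : AnaNat y z) {a : x.S} {b b' : y.S} {c : z.S}
    (hb : x.cov a = y.cov b) (hb' : x.cov a = y.cov b') (h : x.cov a = z.cov c) :
    χ.app a b hb ≫ ψ.app b c (hb.symm.trans h) =
      χ.app a b' hb' ≫ ψ.app b' c (hb'.symm.trans h) := by
  rw [← χ.app_comp_map_eqToHom hb (hb.symm.trans hb'), Category.assoc, map_eqToHom_comp_app]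

noncomputable def vcomp (ψ : AnaNat y z) : AnaNat x z where
  app a c h :=
    χ.app a (surjInv y.cov_surj (x.cov a)) (surjInv_eq _ _).symm ≫
      ψ.app _ c ((surjInv_eq _ _).trans h)
  nat a a' c c' h h' f := by
    rw [← Category.assoc, χ.nat a a' _ _ (surjInv_eq y.cov_surj _).symm
      (surjInv_eq y.cov_surj _).symm f, Category.assoc,
      ψ.nat _ _ c c' ((surjInv_eq y.cov_surj _).trans h)]
    simp

theorem vcomp_app (ψ : AnaNat y z) {a : x.S} {c : z.S} (h : x.cov a = z.cov c) (b : y.S)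
    (hb : y.cov b = x.cov a) :
    (χ.vcomp ψ).app a c h = χ.app a b hb.symm ≫ ψ.app b c (hb.trans h) :=
  χ.app_comp_app_eq ψ _ _ h

end AnaNat

noncomputable instance Anafunctor.category (X Y : SmallCat.{u}) :
    Category (Anafunctor X Y) where
  Hom := AnaNat
  id := AnaNat.id
  comp := AnaNat.vcomp
  id_comp χ := by
    ext a c h
    simp [AnaNat.vcomp_app _ _ h a rfl]
  comp_id χ := by
    ext a c h
    simp [AnaNat.vcomp_app _ _ h c h.symm]
  assoc {w x y z} χ ψ φ := by
    ext a d h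
    obtain ⟨b, hb⟩ := x.cov_surj (w.cov a)
    obtain ⟨c, hc⟩ := y.cov_surj (w.cov a)
    simp only [AnaNat.vcomp_app _ _ _ b hb, AnaNat.vcomp_app _ _ _ c hc,
      AnaNat.vcomp_app _ _ _ c (hc.trans hb.symm), Category.assoc]

namespace AnaNat

variable {X Y Z : SmallCat.{u}}

theorem appOver_vcomp {x y z : Anafunctor X Y} (χ : AnaNat x y) (ψ : AnaNat y z)
    {a : x.S} {b : y.S} {c : z.S} (u : x.cov a ⟶ y.cov b) (v : y.cov b ⟶ z.cov c) :
    χ.appOver a b u ≫ ψ.appOver b c v = (χ.vcomp ψ).appOver a c (u ≫ v) := by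
  obtain ⟨b₀, hb₀⟩ := y.cov_surj (x.cov a)
  obtain ⟨c₀, hc₀⟩ := z.cov_surj (x.cov a)
  rw [χ.appOver_eq u b₀ hb₀, (χ.vcomp ψ).appOver_eq _ c₀ hc₀,
    vcomp_app χ ψ hc₀.symm b₀ hb₀]
  simp only [Category.assoc, map_comp_appOver, ψ.app_comp_map]
  simp

noncomputable def whiskerLeft (f : Anafunctor X Y) {g h : Anafunctor Y Z} (η : AnaNat g h) :
    AnaNat (anaComp f g) (anaComp f h) where
  app p q hpq :=
    η.appOver p.1.2 q.1.2 (eqToHom p.2 ≫ f.map p.1.1 q.1.1 (eqToHom hpq) ≫ eqToHom q.2.symm)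
  nat _ _ _ _ _ _ _ := by simp

def whiskerRight {g h : Anafunctor X Y} (η : AnaNat g h) (f : Anafunctor Y Z) :
    AnaNat (anaComp g f) (anaComp h f) where
  app p q hpq := f.map p.1.2 q.1.2 (eqToHom p.2 ≫ η.app p.1.1 q.1.1 hpq ≫ eqToHom q.2.symm)
  nat _ _ _ _ hpq hpq' φ := by simp [reassoc_of% η.nat _ _ _ _ hpq hpq' φ]

@[simp]
theorem whiskerLeft_app (f : Anafunctor X Y) {g h : Anafunctor Y Z} (η : AnaNat g h)
    (p : (anaComp f g).S) (q : (anaComp f h).S) (hpq : f.cov p.1.1 = f.cov q.1.1) :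
    (whiskerLeft f η).app p q hpq = η.appOver p.1.2 q.1.2
      (eqToHom p.2 ≫ f.map p.1.1 q.1.1 (eqToHom hpq) ≫ eqToHom q.2.symm) :=
  rfl

@[simp]
theorem whiskerRight_app {g h : Anafunctor X Y} (η : AnaNat g h) (f : Anafunctor Y Z)
    (p : (anaComp g f).S) (q : (anaComp h f).S) (hpq : g.cov p.1.1 = h.cov q.1.1) :
    (whiskerRight η f).app p q hpq =
      f.map p.1.2 q.1.2 (eqToHom p.2 ≫ η.app p.1.1 q.1.1 hpq ≫ eqToHom q.2.symm) :=
  rfl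

theorem whiskerLeft_appOver (f : Anafunctor X Y) {g h : Anafunctor Y Z} (η : AnaNat g h)
    (p : (anaComp f g).S) (q : (anaComp f h).S) (w : f.cov p.1.1 ⟶ f.cov q.1.1) :
    (whiskerLeft f η).appOver p q w =
      η.appOver p.1.2 q.1.2 (eqToHom p.2 ≫ f.map p.1.1 q.1.1 w ≫ eqToHom q.2.symm) := by
  obtain ⟨b, hb⟩ := h.cov_surj (f.obj p.1.1)
  rw [(whiskerLeft f η).appOver_eq w (⟨(p.1.1, b), hb⟩ : (anaComp f h).S) rfl, whiskerLeft_app,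
    appOver_comp_map]
  simp

theorem whiskerRight_appOver {g h : Anafunctor X Y} (η : AnaNat g h) (f : Anafunctor Y Z)
    (p : (anaComp g f).S) (q : (anaComp h f).S) (w : g.cov p.1.1 ⟶ h.cov q.1.1) :
    (whiskerRight η f).appOver p q w =
      f.map p.1.2 q.1.2 (eqToHom p.2 ≫ η.appOver p.1.1 q.1.1 w ≫ eqToHom q.2.symm) := by
  obtain ⟨b, hb⟩ := h.cov_surj (g.cov p.1.1)
  obtain ⟨c, hc⟩ := f.cov_surj (h.obj b)
  rw [(whiskerRight η f).appOver_eq w (⟨(b, c), hc⟩ : (anaComp h f).S) hb,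
    whiskerRight_app, η.appOver_eq w b hb]
  simp

end AnaNat

structure Anafunctor.Reindexing {X Y : SmallCat.{u}} (F G : Anafunctor X Y) where
  toFun : F.S → G.S
  cov_toFun : ∀ a, G.cov (toFun a) = F.cov a
  obj_toFun : ∀ a, G.obj (toFun a) = F.obj a
  map_eq : ∀ (a b : F.S) (f : F.cov a ⟶ F.cov b),
    F.map a b f = eqToHom (obj_toFun a).symm ≫
      G.map (toFun a) (toFun b) (eqToHom (cov_toFun a) ≫ f ≫ eqToHom (cov_toFun b).symm) ≫
        eqToHom (obj_toFun b)

namespace Anafunctor.Reindexing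

section

variable {X Y : SmallCat.{u}} {F G H : Anafunctor X Y} (R : Reindexing F G)

def hom : AnaNat F G where
  app a b h :=
    eqToHom (R.obj_toFun a).symm ≫ G.map (R.toFun a) b (eqToHom ((R.cov_toFun a).trans h))
  nat a a' b b' h h' f := by simp [R.map_eq a a' f]

def inv : AnaNat G F where
  app b a h :=
    G.map b (R.toFun a) (eqToHom (h.trans (R.cov_toFun a).symm)) ≫ eqToHom (R.obj_toFun a)
  nat b b' a a' h h' f := by simp [R.map_eq a a']

@[simp]
theorem hom_app (a : F.S) (b : G.S) (h : F.cov a = G.cov b) :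
    R.hom.app a b h =
      eqToHom (R.obj_toFun a).symm ≫ G.map (R.toFun a) b (eqToHom ((R.cov_toFun a).trans h)) :=
  rfl

@[simp]
theorem inv_app (b : G.S) (a : F.S) (h : G.cov b = F.cov a) :
    R.inv.app b a h =
      G.map b (R.toFun a) (eqToHom (h.trans (R.cov_toFun a).symm)) ≫ eqToHom (R.obj_toFun a) :=
  rfl

@[simp]
theorem hom_vcomp_app (ψ : AnaNat G H) (a : F.S) (c : H.S) (h : F.cov a = H.cov c) :
    (R.hom.vcomp ψ).app a c h =
      eqToHom (R.obj_toFun a).symm ≫ ψ.app (R.toFun a) c ((R.cov_toFun a).trans h) := by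
  simp [AnaNat.vcomp_app _ _ h _ (R.cov_toFun a)]

@[simp]
theorem vcomp_inv_app (χ : AnaNat H G) (a : H.S) (c : F.S) (h : H.cov a = F.cov c) :
    (χ.vcomp R.inv).app a c h =
      χ.app a (R.toFun c) (h.trans (R.cov_toFun c).symm) ≫ eqToHom (R.obj_toFun c) := by
  simp [AnaNat.vcomp_app _ _ h _ ((R.cov_toFun c).trans h.symm)]

theorem hom_appOver (a : F.S) (b : G.S) (w : F.cov a ⟶ G.cov b) :
    R.hom.appOver a b w =
      eqToHom (R.obj_toFun a).symm ≫ G.map (R.toFun a) b (eqToHom (R.cov_toFun a) ≫ w) := by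
  rw [R.hom.appOver_eq w (R.toFun a) (R.cov_toFun a)]
  simp

noncomputable def iso : F ≅ G where
  hom := R.hom
  inv := R.inv
  hom_inv_id := by
    refine AnaNat.ext fun a a' h => ?_
    change (R.hom.vcomp R.inv).app a a' h = F.map a a' (eqToHom h)
    simp [R.map_eq a a']
  inv_hom_id := by
    refine AnaNat.ext fun b b' h => ?_
    change (R.inv.vcomp R.hom).app b b' h = G.map b b' (eqToHom h)
    obtain ⟨a, ha⟩ := F.cov_surj (G.cov b)
    simp [AnaNat.vcomp_app _ _ h a ha]

def trans (S : Reindexing G H) : Reindexing F H where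
  toFun := S.toFun ∘ R.toFun
  cov_toFun a := (S.cov_toFun _).trans (R.cov_toFun a)
  obj_toFun a := (S.obj_toFun _).trans (R.obj_toFun a)
  map_eq a b f := by simp [R.map_eq a b, S.map_eq (R.toFun a) (R.toFun b)]

theorem hom_vcomp_hom (S : Reindexing G H) : R.hom.vcomp S.hom = (R.trans S).hom := by
  ext a c h
  simp [trans]

end

variable {W X Y Z : SmallCat.{u}}

def whiskerLeft (f : Anafunctor W X) {F G : Anafunctor X Y} (R : Reindexing F G) :
    Reindexing (anaComp f F) (anaComp f G) where
  toFun p := ⟨(p.1.1, R.toFun p.1.2), (R.cov_toFun _).trans p.2⟩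
  cov_toFun _ := rfl
  obj_toFun p := R.obj_toFun p.1.2
  map_eq p q _ := by simp [R.map_eq p.1.2 q.1.2]

def whiskerRight {F G : Anafunctor W X} (R : Reindexing F G) (h : Anafunctor X Y) :
    Reindexing (anaComp F h) (anaComp G h) where
  toFun p := ⟨(R.toFun p.1.1, p.1.2), p.2.trans (R.obj_toFun _).symm⟩
  cov_toFun p := R.cov_toFun p.1.1
  obj_toFun _ := rfl
  map_eq p q _ := by simp [R.map_eq p.1.1 q.1.1]

theorem whiskerLeft_hom (f : Anafunctor W X) {F G : Anafunctor X Y} (R : Reindexing F G) :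
    AnaNat.whiskerLeft f R.hom = (R.whiskerLeft f).hom := by
  ext p q hpq
  simp [whiskerLeft, hom_appOver]

theorem whiskerRight_hom {F G : Anafunctor W X} (R : Reindexing F G) (h : Anafunctor X Y) :
    AnaNat.whiskerRight R.hom h = (R.whiskerRight h).hom := by
  ext p q hpq
  simp [whiskerRight]

def associator (f : Anafunctor W X) (g : Anafunctor X Y) (h : Anafunctor Y Z) :
    Reindexing (anaComp (anaComp f g) h) (anaComp f (anaComp g h)) where
  toFun p := ⟨(p.1.1.1.1, ⟨(p.1.1.1.2, p.1.2), p.2⟩), p.1.1.2⟩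
  cov_toFun _ := rfl
  obj_toFun _ := rfl
  map_eq _ _ _ := by simp

def leftUnitor (f : Anafunctor X Y) : Reindexing (anaComp (anaId X) f) f where
  toFun p := p.1.2
  cov_toFun p := p.2
  obj_toFun _ := rfl
  map_eq _ _ _ := by simp

def rightUnitor (f : Anafunctor X Y) : Reindexing (anaComp f (anaId Y)) f where
  toFun p := p.1.1
  cov_toFun _ := rfl
  obj_toFun p := p.2.symm
  map_eq _ _ _ := by simp

end Anafunctor.Reindexing

namespace AnaNat

open Anafunctor.Reindexing

variable {V W X Y Z : SmallCat.{u}}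

@[simp]
theorem id_appOver {x : Anafunctor X Y} {a b : x.S} (w : x.cov a ⟶ x.cov b) :
    (AnaNat.id x).appOver a b w = x.map a b w := by
  simp [(AnaNat.id x).appOver_eq w a rfl]

theorem whiskerLeft_id (f : Anafunctor X Y) (g : Anafunctor Y Z) :
    whiskerLeft f (AnaNat.id g) = AnaNat.id (anaComp f g) := by
  ext p q hpq
  simp

theorem whiskerLeft_vcomp (f : Anafunctor X Y) {g h i : Anafunctor Y Z} (η : AnaNat g h)
    (θ : AnaNat h i) :
    whiskerLeft f (η.vcomp θ) = (whiskerLeft f η).vcomp (whiskerLeft f θ) := by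
  ext p q hpq
  obtain ⟨b, hb⟩ := h.cov_surj (g.cov p.1.2)
  rw [vcomp_app _ _ hpq (⟨(p.1.1, b), hb.trans p.2⟩ : (anaComp f h).S) rfl]
  simp only [whiskerLeft_app, appOver_vcomp]
  simp

theorem id_whiskerLeft {f g : Anafunctor X Y} (η : AnaNat f g) :
    whiskerLeft (anaId X) η = (leftUnitor f).hom.vcomp (η.vcomp (leftUnitor g).inv) := by
  ext p q hpq
  simp [leftUnitor]

theorem comp_whiskerLeft (f : Anafunctor W X) (g : Anafunctor X Y) {h h' : Anafunctor Y Z}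
    (η : AnaNat h h') :
    whiskerLeft (anaComp f g) η =
      (associator f g h).hom.vcomp
        ((whiskerLeft f (whiskerLeft g η)).vcomp (associator f g h').inv) := by
  ext p q hpq
  simp [Anafunctor.Reindexing.associator, whiskerLeft_appOver]

theorem id_whiskerRight (f : Anafunctor X Y) (g : Anafunctor Y Z) :
    whiskerRight (AnaNat.id f) g = AnaNat.id (anaComp f g) := by
  ext p q hpq
  simp

theorem vcomp_whiskerRight {f g h : Anafunctor X Y} (η : AnaNat f g) (θ : AnaNat g h)
    (i : Anafunctor Y Z) :
    whiskerRight (η.vcomp θ) i = (whiskerRight η i).vcomp (whiskerRight θ i) := by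
  ext p q hpq
  obtain ⟨b, hb⟩ := g.cov_surj (f.cov p.1.1)
  obtain ⟨c, hc⟩ := i.cov_surj (g.obj b)
  rw [vcomp_app _ _ hpq (⟨(b, c), hc⟩ : (anaComp g i).S) hb, whiskerRight_app,
    vcomp_app η θ hpq b hb]
  simp

theorem whiskerRight_id {f g : Anafunctor X Y} (η : AnaNat f g) :
    whiskerRight η (anaId Y) = (rightUnitor f).hom.vcomp (η.vcomp (rightUnitor g).inv) := by
  ext p q hpq
  simp [rightUnitor]

theorem whiskerRight_comp {f f' : Anafunctor W X} (η : AnaNat f f') (g : Anafunctor X Y)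
    (h : Anafunctor Y Z) :
    whiskerRight η (anaComp g h) =
      (associator f g h).inv.vcomp
        ((whiskerRight (whiskerRight η g) h).vcomp (associator f' g h).hom) := by
  ext p q hpq
  -- the middle specifications are the preimages of `p` and `q` under the associators
  rw [vcomp_app _ _ hpq
      (⟨(⟨(p.1.1, p.1.2.1.1), p.2⟩, p.1.2.1.2), p.1.2.2⟩ : (anaComp (anaComp f g) h).S) rfl,
    vcomp_app _ _ _
      (⟨(⟨(q.1.1, q.1.2.1.1), q.2⟩, q.1.2.1.2), q.1.2.2⟩ : (anaComp (anaComp f' g) h).S)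
      hpq.symm]
  simp [Anafunctor.Reindexing.associator]

theorem whisker_assoc (f : Anafunctor W X) {g g' : Anafunctor X Y} (η : AnaNat g g')
    (h : Anafunctor Y Z) :
    whiskerRight (whiskerLeft f η) h =
      (associator f g h).hom.vcomp
        ((whiskerLeft f (whiskerRight η h)).vcomp (associator f g' h).inv) := by
  ext p q hpq
  simp [Anafunctor.Reindexing.associator, whiskerRight_appOver]

theorem whisker_exchange {f g : Anafunctor X Y} {h i : Anafunctor Y Z} (η : AnaNat f g)
    (θ : AnaNat h i) :
    (whiskerLeft f θ).vcomp (whiskerRight η i) =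
      (whiskerRight η h).vcomp (whiskerLeft g θ) := by
  ext p q hpq
  obtain ⟨c, hc⟩ := i.cov_surj (f.obj p.1.1)
  obtain ⟨c', hc'⟩ := h.cov_surj (g.obj q.1.1)
  rw [vcomp_app _ _ hpq (⟨(p.1.1, c), hc⟩ : (anaComp f i).S) rfl,
    vcomp_app _ _ hpq (⟨(q.1.1, c'), hc'⟩ : (anaComp g h).S) hpq.symm, whiskerLeft_app,
    whiskerRight_app, whiskerRight_app, whiskerLeft_app, appOver_comp_map, map_comp_appOver]
  simp

theorem pentagon (f : Anafunctor V W) (g : Anafunctor W X) (h : Anafunctor X Y)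
    (i : Anafunctor Y Z) :
    (whiskerRight (associator f g h).hom i).vcomp
        ((associator f (anaComp g h) i).hom.vcomp (whiskerLeft f (associator g h i).hom)) =
      (associator (anaComp f g) h i).hom.vcomp (associator f g (anaComp h i)).hom := by
  simp only [whiskerRight_hom, whiskerLeft_hom, hom_vcomp_hom]
  rfl

theorem triangle (f : Anafunctor X Y) (g : Anafunctor Y Z) :
    (associator f (anaId Y) g).hom.vcomp (whiskerLeft f (leftUnitor g).hom) =
      whiskerRight (rightUnitor f).hom g := by
  rw [whiskerRight_hom, whiskerLeft_hom, hom_vcomp_hom]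
  rfl

end AnaNat

open Anafunctor.Reindexing in
noncomputable instance SmallCat.anaBicategory : Bicategory.{u, u + 1, u + 1} SmallCat.{u} where
  Hom := Anafunctor
  id := anaId
  comp := anaComp
  homCategory := Anafunctor.category
  whiskerLeft f _ _ η := AnaNat.whiskerLeft f η
  whiskerRight η h := AnaNat.whiskerRight η h
  associator f g h := (associator f g h).iso
  leftUnitor f := (leftUnitor f).iso
  rightUnitor f := (rightUnitor f).iso
  whiskerLeft_id := AnaNat.whiskerLeft_id
  whiskerLeft_comp := AnaNat.whiskerLeft_vcomp
  id_whiskerLeft := AnaNat.id_whiskerLeft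
  comp_whiskerLeft := AnaNat.comp_whiskerLeft
  id_whiskerRight := AnaNat.id_whiskerRight
  comp_whiskerRight := AnaNat.vcomp_whiskerRight
  whiskerRight_id := AnaNat.whiskerRight_id
  whiskerRight_comp := AnaNat.whiskerRight_comp
  whisker_assoc := AnaNat.whisker_assoc
  whisker_exchange := AnaNat.whisker_exchange
  pentagon := AnaNat.pentagon
  triangle := AnaNat.triangle

/-- small categories, anafunctors, and natural transformations between
anafunctors form a bicategory, in which the identity anafunctor, the composite of
anafunctors, and the vertical composite of natural transformations are as specified
(the latter characterized by `(χ;ψ)(a, c) = χ(a, b) ≫ ψ(b, c)` for any valid `b`,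
independently of the choice of `b`). -/
theorem stmt11 :
    ∃ inst : Bicategory.{u, u + 1, u + 1} SmallCat.{u},
      (@Quiver.Hom SmallCat.{u} inst.toCategoryStruct.toQuiver =
        fun X Y => Anafunctor X Y) ∧
      (∀ X : SmallCat.{u},
        HEq (@CategoryStruct.id SmallCat.{u} inst.toCategoryStruct X) (anaId X)) ∧
      (∀ (X Y Z : SmallCat.{u})
          (f : @Quiver.Hom SmallCat.{u} inst.toCategoryStruct.toQuiver X Y)
          (g : @Quiver.Hom SmallCat.{u} inst.toCategoryStruct.toQuiver Y Z)
          (f' : Anafunctor X Y) (g' : Anafunctor Y Z),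
        HEq f f' → HEq g g' →
        HEq (@CategoryStruct.comp SmallCat.{u} inst.toCategoryStruct X Y Z f g)
          (anaComp f' g')) ∧
      (∀ (X Y : SmallCat.{u})
          (x y : @Quiver.Hom SmallCat.{u} inst.toCategoryStruct.toQuiver X Y)
          (x' y' : Anafunctor X Y), HEq x x' → HEq y y' →
        @Quiver.Hom _ (inst.homCategory X Y).toCategoryStruct.toQuiver x y =
          AnaNat x' y') ∧
      (∀ (X Y : SmallCat.{u})
          (x y z : @Quiver.Hom SmallCat.{u} inst.toCategoryStruct.toQuiver X Y)
          (x' y' z' : Anafunctor X Y), HEq x x' → HEq y y' → HEq z z' →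
        ∀ (χ : @Quiver.Hom _ (inst.homCategory X Y).toCategoryStruct.toQuiver x y)
          (ψ : @Quiver.Hom _ (inst.homCategory X Y).toCategoryStruct.toQuiver y z)
          (χ' : AnaNat x' y') (ψ' : AnaNat y' z'), HEq χ χ' → HEq ψ ψ' →
        ∀ vc : AnaNat x' z',
          (∀ (a : x'.S) (c : z'.S) (h : x'.cov a = z'.cov c) (b : y'.S)
              (hb : y'.cov b = x'.cov a),
            vc.app a c h = χ'.app a b hb.symm ≫ ψ'.app b c (hb.trans h)) →
          HEq (@CategoryStruct.comp _ (inst.homCategory X Y).toCategoryStruct x y z χ ψ)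
            vc) := by
  refine ⟨SmallCat.anaBicategory, rfl, fun _ => HEq.rfl, ?_, ?_, ?_⟩
  · rintro X Y Z f g _ _ ⟨⟩ ⟨⟩
    rfl
  · rintro X Y x y _ _ ⟨⟩ ⟨⟩
    rfl
  · rintro X Y x y z _ _ _ ⟨⟩ ⟨⟩ ⟨⟩ χ ψ _ _ ⟨⟩ ⟨⟩ vc hvc
    refine heq_of_eq (AnaNat.ext fun a c h => ?_)
    obtain ⟨b, hb⟩ := y.cov_surj (x.cov a)
    exact (AnaNat.vcomp_app χ ψ h b hb).trans (hvc a c h b hb).symm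
end

section
/- Let C be a monoidal category, B and U types, j : U → B a function, and suppose given objects g x y of C for each x, y in U with j x = j y together with isomorphisms γ x y z : g x y ⊗ g y z ≅ g x z satisfying the associativity coherence of a 2-transition (no unit data is assumed). Suppose moreover that for each x in U there are an object ḡ x of C and invertible morphisms ι x : 𝟙 ⟶ g x x ⊗ ḡ x and ε x : ḡ x ⊗ g x x ⟶ 𝟙 satisfying the two zig-zag (triangle) identities. Define g' x y := g x y ⊗ ḡ y, define η' x : 𝟙 ⟶ g' x x to be ι x, and define γ' x y z : g' x y ⊗ g' y z ⟶ g' x z to be the composite which (modulo associators) expands g y z into g y y ⊗ g y z via the inverse of γ y y z, cancels ḡ y ⊗ g y y via ε y, and then applies γ x y z on g x y ⊗ g y z. Then (g', γ', η') is a 2-transition on (U, j): γ' satisfies the associativity coherence and η' satisfies both unit coherences. In particular, a full 2-transition (with unit data η' satisfying η' x = ι x, i.e. a semistrict 2-transition) can be constructed from the data g and γ alone. -/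
universe w v u

open CategoryTheory MonoidalCategory

/-- A 2-transition on `(U, j)` valued in a monoidal category `C`: objects `g x y`,
multiplicator isomorphisms `γ`, identitor isomorphisms `η`, satisfying associativity
and unit coherence laws. -/
structure TwoTransition (C : Type u) [Category.{v} C] [MonoidalCategory C]
    {U B : Type w} (j : U → B) where
  g : ∀ x y : U, j x = j y → C
  γ : ∀ (x y z : U) (hxy : j x = j y) (hyz : j y = j z),
    g x y hxy ⊗ g y z hyz ≅ g x z (hxy.trans hyz)
  η : ∀ x : U, 𝟙_ C ≅ g x x rfl
  assoc : ∀ (w x y z : U) (hwx : j w = j x) (hxy : j x = j y) (hyz : j y = j z),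
    (γ w x y hwx hxy).hom ▷ g y z hyz ≫ (γ w y z (hwx.trans hxy) hyz).hom =
      (α_ (g w x hwx) (g x y hxy) (g y z hyz)).hom ≫
        g w x hwx ◁ (γ x y z hxy hyz).hom ≫ (γ w x z hwx (hxy.trans hyz)).hom
  unit_left : ∀ (x y : U) (hxy : j x = j y),
    (η x).hom ▷ g x y hxy ≫ (γ x x y rfl hxy).hom = (λ_ (g x y hxy)).hom
  unit_right : ∀ (x y : U) (hxy : j x = j y),
    g x y hxy ◁ (η y).hom ≫ (γ x y y hxy rfl).hom = (ρ_ (g x y hxy)).hom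

/-- A 2-transition morphism between 2-transitions over the same base: objects
`b x x'`, with left-actor `σ` and right-actor `δ` isomorphisms satisfying the five
coherence laws. -/
structure TwoTransMor {C : Type u} [Category.{v} C] [MonoidalCategory C]
    {U U' B : Type w} {j : U → B} {j' : U' → B}
    (t : TwoTransition C j) (t' : TwoTransition C j') where
  b : ∀ (x : U) (x' : U'), j x = j' x' → C
  σ : ∀ (x y : U) (x' : U') (hxy : j x = j y) (hyx' : j y = j' x'),
    t.g x y hxy ⊗ b y x' hyx' ≅ b x x' (hxy.trans hyx')
  δ : ∀ (x : U) (x' y' : U') (hxx' : j x = j' x') (hx'y' : j' x' = j' y'),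
    b x x' hxx' ⊗ t'.g x' y' hx'y' ≅ b x y' (hxx'.trans hx'y')
  σ_assoc : ∀ (x y z : U) (x' : U') (hxy : j x = j y) (hyz : j y = j z)
      (hzx' : j z = j' x'),
    (t.γ x y z hxy hyz).hom ▷ b z x' hzx' ≫ (σ x z x' (hxy.trans hyz) hzx').hom =
      (α_ (t.g x y hxy) (t.g y z hyz) (b z x' hzx')).hom ≫
        t.g x y hxy ◁ (σ y z x' hyz hzx').hom ≫ (σ x y x' hxy (hyz.trans hzx')).hom
  σ_unit : ∀ (x : U) (x' : U') (hxx' : j x = j' x'),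
    (t.η x).hom ▷ b x x' hxx' ≫ (σ x x x' rfl hxx').hom = (λ_ (b x x' hxx')).hom
  δ_assoc : ∀ (x : U) (x' y' z' : U') (hxx' : j x = j' x') (hx'y' : j' x' = j' y')
      (hy'z' : j' y' = j' z'),
    (δ x x' y' hxx' hx'y').hom ▷ t'.g y' z' hy'z' ≫ (δ x y' z' (hxx'.trans hx'y') hy'z').hom =
      (α_ (b x x' hxx') (t'.g x' y' hx'y') (t'.g y' z' hy'z')).hom ≫
        b x x' hxx' ◁ (t'.γ x' y' z' hx'y' hy'z').hom ≫ (δ x x' z' hxx' (hx'y'.trans hy'z')).hom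
  δ_unit : ∀ (x : U) (x' : U') (hxx' : j x = j' x'),
    b x x' hxx' ◁ (t'.η x').hom ≫ (δ x x' x' hxx' rfl).hom = (ρ_ (b x x' hxx')).hom
  σδ_comm : ∀ (x y : U) (x' y' : U') (hxy : j x = j y) (hyx' : j y = j' x')
      (hx'y' : j' x' = j' y'),
    (σ x y x' hxy hyx').hom ▷ t'.g x' y' hx'y' ≫ (δ x x' y' (hxy.trans hyx') hx'y').hom =
      (α_ (t.g x y hxy) (b y x' hyx') (t'.g x' y' hx'y')).hom ≫
        t.g x y hxy ◁ (δ y x' y' hyx' hx'y').hom ≫ (σ x y y' hxy (hyx'.trans hx'y')).hom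

variable {C : Type u} [Category.{v} C] [MonoidalCategory C] {U B : Type w} {j : U → B}

/-- The multiplicator of the semistrictification: with `g' x y := g x y ⊗ ḡ y`, the
isomorphism `g' x y ⊗ g' y z ≅ g' x z` which (modulo associators) expands `g y z` into
`g y y ⊗ g y z` via `γ⁻¹`, cancels `ḡ y ⊗ g y y` via `ε y`, then applies `γ x y z`. -/
def sstrictIso (g : ∀ x y : U, j x = j y → C)
    (γ : ∀ (x y z : U) (hxy : j x = j y) (hyz : j y = j z),
      g x y hxy ⊗ g y z hyz ≅ g x z (hxy.trans hyz))
    (gbar : U → C) (ε : ∀ x : U, gbar x ⊗ g x x rfl ≅ 𝟙_ C)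
    (x y z : U) (hxy : j x = j y) (hyz : j y = j z) :
    (g x y hxy ⊗ gbar y) ⊗ (g y z hyz ⊗ gbar z) ≅ g x z (hxy.trans hyz) ⊗ gbar z :=
  whiskerLeftIso (g x y hxy ⊗ gbar y)
      (whiskerRightIso (γ y y z rfl hyz).symm (gbar z)) ≪≫
    whiskerLeftIso (g x y hxy ⊗ gbar y) (α_ (g y y rfl) (g y z hyz) (gbar z)) ≪≫
    (α_ (g x y hxy ⊗ gbar y) (g y y rfl) (g y z hyz ⊗ gbar z)).symm ≪≫
    whiskerRightIso (α_ (g x y hxy) (gbar y) (g y y rfl)) (g y z hyz ⊗ gbar z) ≪≫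
    whiskerRightIso (whiskerLeftIso (g x y hxy) (ε y)) (g y z hyz ⊗ gbar z) ≪≫
    whiskerRightIso (ρ_ (g x y hxy)) (g y z hyz ⊗ gbar z) ≪≫
    (α_ (g x y hxy) (g y z hyz) (gbar z)).symm ≪≫
    whiskerRightIso (γ x y z hxy hyz) (gbar z)


section AuxSemistrict

set_option maxHeartbeats 1000000

lemma right_unit_of_left_unit {A S : C} (u : A ⊗ S ≅ A) (v : S ⊗ S ≅ S) (i : 𝟙_ C ≅ S)
    (hassoc : u.hom ▷ S ≫ u.hom = (α_ A S S).hom ≫ A ◁ v.hom ≫ u.hom)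
    (hleft : i.hom ▷ S ≫ v.hom = (λ_ S).hom) :
    A ◁ i.hom ≫ u.hom = (ρ_ A).hom := by
  have husr : u.hom ▷ S = (α_ A S S).hom ≫ A ◁ v.hom := by
    have := hassoc
    rw [← Category.assoc] at this
    exact (cancel_mono u.hom).mp (by simpa using this)
  set f : A ⟶ A := (ρ_ A).inv ≫ A ◁ i.hom ≫ u.hom with hf
  have hff : f ≫ f = f := by
    calc f ≫ f = f ≫ (ρ_ A).inv ≫ A ◁ i.hom ≫ u.hom := rfl
      _ = (ρ_ A).inv ≫ f ▷ 𝟙_ C ≫ A ◁ i.hom ≫ u.hom := by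
          rw [← Category.assoc, ← Category.assoc, rightUnitor_inv_naturality]
          simp [Category.assoc]
      _ = (ρ_ A).inv ≫ A ◁ i.hom ≫ f ▷ S ≫ u.hom := by
          rw [← Category.assoc (f ▷ 𝟙_ C), ← whisker_exchange]
          simp [Category.assoc]
      _ = (ρ_ A).inv ≫ A ◁ i.hom ≫
            ((ρ_ A).inv ▷ S ≫ (A ◁ i.hom) ▷ S ≫ u.hom ▷ S) ≫ u.hom := by
          simp [hf, comp_whiskerRight, Category.assoc]
      _ = (ρ_ A).inv ≫ A ◁ i.hom ≫
            (ρ_ A).inv ▷ S ≫ (A ◁ i.hom) ▷ S ≫ (α_ A S S).hom ≫ A ◁ v.hom ≫ u.hom := by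
          rw [husr]; simp [Category.assoc]
      _ = (ρ_ A).inv ≫ A ◁ i.hom ≫
            (ρ_ A).inv ▷ S ≫ (α_ A (𝟙_ C) S).hom ≫ A ◁ (i.hom ▷ S) ≫ A ◁ v.hom ≫ u.hom := by
          rw [associator_naturality_middle_assoc]
      _ = (ρ_ A).inv ≫ A ◁ i.hom ≫
            (ρ_ A).inv ▷ S ≫ (α_ A (𝟙_ C) S).hom ≫ A ◁ (λ_ S).hom ≫ u.hom := by
          rw [← MonoidalCategory.whiskerLeft_comp_assoc, hleft]
      _ = f := by
          rw [triangle_assoc]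
          simp [hf]
  have hiso : IsIso f := by
    rw [hf]; infer_instance
  have : f = 𝟙 A := by
    rw [← Category.comp_id f] at hff
    exact (cancel_epi f).mp (by simpa using hff)
  rw [hf] at this
  rw [Iso.inv_comp_eq, Category.comp_id] at this
  exact this

variable (g : ∀ x y : U, j x = j y → C)
  (γ : ∀ (x y z : U) (hxy : j x = j y) (hyz : j y = j z),
    g x y hxy ⊗ g y z hyz ≅ g x z (hxy.trans hyz))
  (gbar : U → C)
  (ι : ∀ x : U, 𝟙_ C ≅ g x x rfl ⊗ gbar x)
  (ε : ∀ x : U, gbar x ⊗ g x x rfl ≅ 𝟙_ C)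

/-- The canonical cancellation morphism `ḡ y ⊗ g y z ⟶ g y z`. -/
def Ecan (y z : U) (hyz : j y = j z) : gbar y ⊗ g y z hyz ⟶ g y z hyz :=
  gbar y ◁ (γ y y z rfl hyz).inv ≫ (α_ _ _ _).inv ≫ (ε y).hom ▷ g y z hyz ≫ (λ_ _).hom

lemma sstrictIso_hom_eq (x y z : U) (hxy : j x = j y) (hyz : j y = j z) :
    (sstrictIso g γ gbar ε x y z hxy hyz).hom =
      (α_ (g x y hxy) (gbar y) (g y z hyz ⊗ gbar z)).hom ≫
      g x y hxy ◁ ((α_ (gbar y) (g y z hyz) (gbar z)).inv ≫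
        Ecan g γ gbar ε y z hyz ▷ gbar z) ≫
      (α_ (g x y hxy) (g y z hyz) (gbar z)).inv ≫ (γ x y z hxy hyz).hom ▷ gbar z := by
  simp only [sstrictIso, Ecan, Iso.trans_hom, Iso.symm_hom, whiskerRightIso_hom,
    whiskerLeftIso_hom, MonoidalCategory.whiskerLeft_comp, comp_whiskerRight,
    Category.assoc]
  coherence

lemma Ecan_conj
    (hassoc : ∀ (w x y z : U) (hwx : j w = j x) (hxy : j x = j y) (hyz : j y = j z),
      (γ w x y hwx hxy).hom ▷ g y z hyz ≫ (γ w y z (hwx.trans hxy) hyz).hom =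
        (α_ (g w x hwx) (g x y hxy) (g y z hyz)).hom ≫
          g w x hwx ◁ (γ x y z hxy hyz).hom ≫ (γ w x z hwx (hxy.trans hyz)).hom)
    (x y z : U) (hxy : j x = j y) (hyz : j y = j z) :
    gbar x ◁ (γ x y z hxy hyz).hom ≫ Ecan g γ gbar ε x z (hxy.trans hyz) =
      (α_ (gbar x) (g x y hxy) (g y z hyz)).inv ≫
        Ecan g γ gbar ε x y hxy ▷ g y z hyz ≫ (γ x y z hxy hyz).hom := by
  have h : (γ x y z hxy hyz).hom ≫ (γ x x z rfl (hxy.trans hyz)).inv =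
      (γ x x y rfl hxy).inv ▷ g y z hyz ≫ (α_ _ _ _).hom ≫
        g x x rfl ◁ (γ x y z hxy hyz).hom := by
    rw [Iso.comp_inv_eq, Category.assoc, Category.assoc, ← hassoc x x y z rfl hxy hyz,
      ← Category.assoc, ← comp_whiskerRight, Iso.inv_hom_id, id_whiskerRight,
      Category.id_comp]
  calc gbar x ◁ (γ x y z hxy hyz).hom ≫ Ecan g γ gbar ε x z (hxy.trans hyz)
      = gbar x ◁ ((γ x y z hxy hyz).hom ≫ (γ x x z rfl (hxy.trans hyz)).inv) ⊗≫
          (ε x).hom ▷ g x z (hxy.trans hyz) ⊗≫ 𝟙 _ := by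
        simp only [Ecan, MonoidalCategory.whiskerLeft_comp]; coherence
    _ = 𝟙 _ ⊗≫ gbar x ◁ ((γ x x y rfl hxy).inv ▷ g y z hyz) ⊗≫
          (MonoidalCategory.whiskerLeft (gbar x ⊗ g x x rfl) (γ x y z hxy hyz).hom ≫
            (ε x).hom ▷ g x z (hxy.trans hyz)) ⊗≫ 𝟙 _ := by
        rw [h]; simp only [MonoidalCategory.whiskerLeft_comp]; coherence
    _ = 𝟙 _ ⊗≫ gbar x ◁ ((γ x x y rfl hxy).inv ▷ g y z hyz) ⊗≫
          ((ε x).hom ▷ (g x y hxy ⊗ g y z hyz) ≫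
            MonoidalCategory.whiskerLeft (𝟙_ C) (γ x y z hxy hyz).hom) ⊗≫ 𝟙 _ := by
        rw [whisker_exchange]
    _ = (α_ (gbar x) (g x y hxy) (g y z hyz)).inv ≫
        Ecan g γ gbar ε x y hxy ▷ g y z hyz ≫ (γ x y z hxy hyz).hom := by
        simp only [Ecan, comp_whiskerRight, MonoidalCategory.whiskerLeft_comp,
          Category.assoc]
        coherence

lemma main_assoc
    (hassoc : ∀ (w x y z : U) (hwx : j w = j x) (hxy : j x = j y) (hyz : j y = j z),
      (γ w x y hwx hxy).hom ▷ g y z hyz ≫ (γ w y z (hwx.trans hxy) hyz).hom =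
        (α_ (g w x hwx) (g x y hxy) (g y z hyz)).hom ≫
          g w x hwx ◁ (γ x y z hxy hyz).hom ≫ (γ w x z hwx (hxy.trans hyz)).hom)
    (w x y z : U) (hwx : j w = j x) (hxy : j x = j y) (hyz : j y = j z) :
    (sstrictIso g γ gbar ε w x y hwx hxy).hom ▷ (g y z hyz ⊗ gbar z) ≫
        (sstrictIso g γ gbar ε w y z (hwx.trans hxy) hyz).hom =
      (α_ (g w x hwx ⊗ gbar x) (g x y hxy ⊗ gbar y) (g y z hyz ⊗ gbar z)).hom ≫
        (g w x hwx ⊗ gbar x) ◁ (sstrictIso g γ gbar ε x y z hxy hyz).hom ≫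
        (sstrictIso g γ gbar ε w x z hwx (hxy.trans hyz)).hom := by
  rw [sstrictIso_hom_eq, sstrictIso_hom_eq, sstrictIso_hom_eq, sstrictIso_hom_eq]
  set E₁ := Ecan g γ gbar ε x y hxy with hE₁
  set E₂ := Ecan g γ gbar ε y z hyz with hE₂
  calc _
      = 𝟙 _ ⊗≫ (g w x hwx ◁ E₁) ▷ ((gbar y ⊗ g y z hyz) ⊗ gbar z) ⊗≫
          ((γ w x y hwx hxy).hom ▷ ((gbar y ⊗ g y z hyz) ⊗ gbar z) ≫
            g w y (hwx.trans hxy) ◁ (E₂ ▷ gbar z)) ⊗≫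
          (γ w y z (hwx.trans hxy) hyz).hom ▷ gbar z := by
        coherence
    _ = 𝟙 _ ⊗≫ (g w x hwx ◁ E₁) ▷ ((gbar y ⊗ g y z hyz) ⊗ gbar z) ⊗≫
          (MonoidalCategory.whiskerLeft (g w x hwx ⊗ g x y hxy) (E₂ ▷ gbar z) ≫
            (γ w x y hwx hxy).hom ▷ (g y z hyz ⊗ gbar z)) ⊗≫
          (γ w y z (hwx.trans hxy) hyz).hom ▷ gbar z := by
        rw [← whisker_exchange]
    _ = 𝟙 _ ⊗≫ ((g w x hwx ◁ E₁) ▷ ((gbar y ⊗ g y z hyz) ⊗ gbar z) ≫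
            MonoidalCategory.whiskerLeft (g w x hwx ⊗ g x y hxy) (E₂ ▷ gbar z)) ⊗≫
          ((γ w x y hwx hxy).hom ▷ g y z hyz) ▷ gbar z ⊗≫
          (γ w y z (hwx.trans hxy) hyz).hom ▷ gbar z := by
        coherence
    _ = 𝟙 _ ⊗≫ (MonoidalCategory.whiskerLeft ((g w x hwx ⊗ (gbar x ⊗ g x y hxy) : C))
            (E₂ ▷ gbar z) ≫ (g w x hwx ◁ E₁) ▷ (g y z hyz ⊗ gbar z)) ⊗≫
          ((γ w x y hwx hxy).hom ▷ g y z hyz ≫ (γ w y z (hwx.trans hxy) hyz).hom) ▷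
            gbar z ⊗≫ 𝟙 _ := by
        rw [whisker_exchange]; coherence
    _ = 𝟙 _ ⊗≫ MonoidalCategory.whiskerLeft ((g w x hwx ⊗ (gbar x ⊗ g x y hxy) : C))
            (E₂ ▷ gbar z) ⊗≫
          g w x hwx ◁ ((((α_ (gbar x) (g x y hxy) (g y z hyz)).inv ≫
            E₁ ▷ g y z hyz ≫ (γ x y z hxy hyz).hom)) ▷ gbar z) ⊗≫
          (γ w x z hwx (hxy.trans hyz)).hom ▷ gbar z := by
        rw [hassoc w x y z]
        simp only [comp_whiskerRight, MonoidalCategory.whiskerLeft_comp, Category.assoc]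
        coherence
    _ = _ := by
        rw [hE₁, ← Ecan_conj g γ gbar ε hassoc x y z hxy hyz]
        simp only [comp_whiskerRight, MonoidalCategory.whiskerLeft_comp, Category.assoc]
        coherence

lemma main_unitl
    (zig₁ : ∀ x : U,
      (λ_ (g x x rfl)).inv ≫ (ι x).hom ▷ g x x rfl ≫
        (α_ (g x x rfl) (gbar x) (g x x rfl)).hom ≫ g x x rfl ◁ (ε x).hom ≫
        (ρ_ (g x x rfl)).hom = 𝟙 (g x x rfl))
    (x y : U) (hxy : j x = j y) :
    (ι x).hom ▷ (g x y hxy ⊗ gbar y) ≫ (sstrictIso g γ gbar ε x x y rfl hxy).hom =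
      (λ_ (g x y hxy ⊗ gbar y)).hom := by
  calc (ι x).hom ▷ (g x y hxy ⊗ gbar y) ≫ (sstrictIso g γ gbar ε x x y rfl hxy).hom
      = ((ι x).hom ▷ (g x y hxy ⊗ gbar y) ≫
          MonoidalCategory.whiskerLeft ((g x x rfl ⊗ gbar x : C))
            ((γ x x y rfl hxy).inv ▷ gbar y)) ⊗≫
          ((g x x rfl ◁ (ε x).hom) ▷ g x y hxy) ▷ gbar y ⊗≫
          (γ x x y rfl hxy).hom ▷ gbar y := by
        simp only [sstrictIso, Iso.trans_hom, Iso.symm_hom, whiskerRightIso_hom,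
          whiskerLeftIso_hom, MonoidalCategory.whiskerLeft_comp, comp_whiskerRight,
          Category.assoc]
        coherence
    _ = (MonoidalCategory.whiskerLeft (𝟙_ C) ((γ x x y rfl hxy).inv ▷ gbar y) ≫
          (ι x).hom ▷ ((g x x rfl ⊗ g x y hxy) ⊗ gbar y)) ⊗≫
          ((g x x rfl ◁ (ε x).hom) ▷ g x y hxy) ▷ gbar y ⊗≫
          (γ x x y rfl hxy).hom ▷ gbar y := by
        rw [← whisker_exchange]
    _ = MonoidalCategory.whiskerLeft (𝟙_ C) ((γ x x y rfl hxy).inv ▷ gbar y) ≫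
          (λ_ ((g x x rfl ⊗ g x y hxy) ⊗ gbar y)).hom ≫
          ((((λ_ (g x x rfl)).inv ≫ (ι x).hom ▷ g x x rfl ≫
            (α_ (g x x rfl) (gbar x) (g x x rfl)).hom ≫ g x x rfl ◁ (ε x).hom ≫
            (ρ_ (g x x rfl)).hom) ▷ g x y hxy) ▷ gbar y) ≫
          (γ x x y rfl hxy).hom ▷ gbar y := by
        simp only [comp_whiskerRight, MonoidalCategory.whiskerLeft_comp, Category.assoc]
        coherence
    _ = (λ_ (g x y hxy ⊗ gbar y)).hom := by
        rw [zig₁ x]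
        simp [← comp_whiskerRight]

end AuxSemistrict

/-- semistrictification.  Given `g`, `γ` satisfying only the
associativity coherence, and duality data `ḡ`, `ι`, `ε` satisfying the zig-zag
identities, the data `g' x y := g x y ⊗ ḡ y`, `γ' := sstrictIso`, `η' := ι` satisfy
the associativity and both unit coherences; in particular they constitute a
(semistrict) 2-transition built from `g` and `γ` alone. -/
theorem stmt16 (g : ∀ x y : U, j x = j y → C)
    (γ : ∀ (x y z : U) (hxy : j x = j y) (hyz : j y = j z),
      g x y hxy ⊗ g y z hyz ≅ g x z (hxy.trans hyz))
    (hassoc : ∀ (w x y z : U) (hwx : j w = j x) (hxy : j x = j y) (hyz : j y = j z),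
      (γ w x y hwx hxy).hom ▷ g y z hyz ≫ (γ w y z (hwx.trans hxy) hyz).hom =
        (α_ (g w x hwx) (g x y hxy) (g y z hyz)).hom ≫
          g w x hwx ◁ (γ x y z hxy hyz).hom ≫ (γ w x z hwx (hxy.trans hyz)).hom)
    (gbar : U → C)
    (ι : ∀ x : U, 𝟙_ C ≅ g x x rfl ⊗ gbar x)
    (ε : ∀ x : U, gbar x ⊗ g x x rfl ≅ 𝟙_ C)
    (zig₁ : ∀ x : U,
      (λ_ (g x x rfl)).inv ≫ (ι x).hom ▷ g x x rfl ≫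
        (α_ (g x x rfl) (gbar x) (g x x rfl)).hom ≫ g x x rfl ◁ (ε x).hom ≫
        (ρ_ (g x x rfl)).hom = 𝟙 (g x x rfl))
    (zig₂ : ∀ x : U,
      (ρ_ (gbar x)).inv ≫ gbar x ◁ (ι x).hom ≫
        (α_ (gbar x) (g x x rfl) (gbar x)).inv ≫ (ε x).hom ▷ gbar x ≫
        (λ_ (gbar x)).hom = 𝟙 (gbar x)) :
    (∀ (w x y z : U) (hwx : j w = j x) (hxy : j x = j y) (hyz : j y = j z),
      (sstrictIso g γ gbar ε w x y hwx hxy).hom ▷ (g y z hyz ⊗ gbar z) ≫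
          (sstrictIso g γ gbar ε w y z (hwx.trans hxy) hyz).hom =
        (α_ (g w x hwx ⊗ gbar x) (g x y hxy ⊗ gbar y) (g y z hyz ⊗ gbar z)).hom ≫
          (g w x hwx ⊗ gbar x) ◁ (sstrictIso g γ gbar ε x y z hxy hyz).hom ≫
          (sstrictIso g γ gbar ε w x z hwx (hxy.trans hyz)).hom) ∧
    (∀ (x y : U) (hxy : j x = j y),
      (ι x).hom ▷ (g x y hxy ⊗ gbar y) ≫ (sstrictIso g γ gbar ε x x y rfl hxy).hom =
        (λ_ (g x y hxy ⊗ gbar y)).hom) ∧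
    (∀ (x y : U) (hxy : j x = j y),
      (g x y hxy ⊗ gbar y) ◁ (ι y).hom ≫ (sstrictIso g γ gbar ε x y y hxy rfl).hom =
        (ρ_ (g x y hxy ⊗ gbar y)).hom) ∧
    (∃ t' : TwoTransition C j,
      ∃ _ : t'.g = fun (x y : U) (h : j x = j y) => g x y h ⊗ gbar y,
        HEq t'.γ (fun (x y z : U) (hxy : j x = j y) (hyz : j y = j z) =>
          sstrictIso g γ gbar ε x y z hxy hyz) ∧
        HEq t'.η ι) := by
  have hA := main_assoc g γ gbar ε hassoc
  have hL := main_unitl g γ gbar ι ε zig₁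
  have hR : ∀ (x y : U) (hxy : j x = j y),
      (g x y hxy ⊗ gbar y) ◁ (ι y).hom ≫ (sstrictIso g γ gbar ε x y y hxy rfl).hom =
        (ρ_ (g x y hxy ⊗ gbar y)).hom := fun x y hxy =>
    right_unit_of_left_unit (sstrictIso g γ gbar ε x y y hxy rfl)
      (sstrictIso g γ gbar ε y y y rfl rfl) (ι y)
      (hA x y y y hxy rfl rfl) (hL y y rfl)
  exact ⟨hA, hL, hR,
    ⟨{ g := fun x y h => g x y h ⊗ gbar y,
       γ := fun x y z hxy hyz => sstrictIso g γ gbar ε x y z hxy hyz,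
       η := ι, assoc := hA, unit_left := hL, unit_right := hR },
      rfl, HEq.rfl, HEq.rfl⟩⟩
end

section
/- Let C be a monoidal category, B and U types, j : U → B, and let g, γ, ḡ, ι, ε be as in the semistrictification construction, with (g', γ', η') the semistrictification of (g, γ) and η any unit data making (g, γ, η) a 2-transition. Define b x y := g x y ⊗ ḡ y and b' x y := g x y for x, y in U with j x = j y. Then there exist isomorphism families σ_b, δ_b, σ_{b'}, δ_{b'}, constructed from γ, ι and ε, making (b, σ_b, δ_b) a 2-transition morphism from g to g' and (b', σ_{b'}, δ_{b'}) a 2-transition morphism from g' to g; and there exist, for all x, x', y in U with j x = j x' = j y, isomorphisms b x x' ⊗ b' x' y ≅ g x y and b' x x' ⊗ b x' y ≅ g' x y which intertwine the σ and δ data of b and b' with γ and γ' (that is, they constitute invertible 2-transition 2-morphisms from the composites b;b' and b';b to the identity 2-transition morphisms of g and of g' respectively). Hence g and its semistrictification g' are equivalent 2-transitions. -/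
universe w v u

open CategoryTheory MonoidalCategory

variable {C : Type u} [Category.{v} C] [MonoidalCategory C] {U B : Type w} {j : U → B}

namespace SS17

variable (t : TwoTransition C j) (gbar : U → C)
  (ε : ∀ x : U, gbar x ⊗ t.g x x rfl ≅ 𝟙_ C)

/-- left cancellation iso -/
def eIso (x y : U) (h : j x = j y) : gbar x ⊗ t.g x y h ≅ t.g x y h :=
  whiskerLeftIso (gbar x) (t.γ x x y rfl h).symm ≪≫ (α_ _ _ _).symm ≪≫
    whiskerRightIso (ε x) (t.g x y h) ≪≫ λ_ _

def σ₁ (x y z : U) (h : j x = j y) (h' : j y = j z) :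
    t.g x y h ⊗ (t.g y z h' ⊗ gbar z) ≅ t.g x z (h.trans h') ⊗ gbar z :=
  (α_ _ _ _).symm ≪≫ whiskerRightIso (t.γ x y z h h') (gbar z)

def σ₂ (x y z : U) (h : j x = j y) (h' : j y = j z) :
    (t.g x y h ⊗ gbar y) ⊗ t.g y z h' ≅ t.g x z (h.trans h') :=
  α_ _ _ _ ≪≫ whiskerLeftIso (t.g x y h) (eIso t gbar ε y z h') ≪≫ t.γ x y z h h'

lemma assoc₂ (w x y z : U) (hwx : j w = j x) (hxy : j x = j y) (hyz : j y = j z) :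
    t.g w x hwx ◁ (t.γ x y z hxy hyz).hom ≫ (t.γ w x z hwx (hxy.trans hyz)).hom =
      (α_ (t.g w x hwx) (t.g x y hxy) (t.g y z hyz)).inv ≫
        (t.γ w x y hwx hxy).hom ▷ t.g y z hyz ≫ (t.γ w y z (hwx.trans hxy) hyz).hom := by
  rw [t.assoc w x y z hwx hxy hyz]
  simp

lemma e_mul (x y z : U) (h : j x = j y) (h' : j y = j z) :
    (eIso t gbar ε x y h).hom ▷ t.g y z h' ≫ (t.γ x y z h h').hom =
      (α_ (gbar x) (t.g x y h) (t.g y z h')).hom ≫ gbar x ◁ (t.γ x y z h h').hom ≫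
        (eIso t gbar ε x z (h.trans h')).hom := by
  have key : (t.γ x x y rfl h).inv ▷ t.g y z h' ≫ (α_ _ _ _).hom ≫
      t.g x x rfl ◁ (t.γ x y z h h').hom =
      (t.γ x y z h h').hom ≫ (t.γ x x z rfl (h.trans h')).inv := by
    rw [← cancel_mono (t.γ x x z rfl (h.trans h')).hom]
    simp only [Category.assoc, Iso.inv_hom_id, Category.comp_id]
    rw [← t.assoc x x y z rfl h h']
    simp [← comp_whiskerRight_assoc]
  simp only [eIso, Iso.trans_hom, Iso.symm_hom, whiskerLeftIso_hom, whiskerRightIso_hom,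
    Category.assoc]
  calc (gbar x ◁ (t.γ x x y rfl h).inv ≫ (α_ _ _ _).inv ≫ (ε x).hom ▷ t.g x y h ≫
        (λ_ (t.g x y h)).hom) ▷ t.g y z h' ≫ (t.γ x y z h h').hom
      = 𝟙 _ ⊗≫ gbar x ◁ ((t.γ x x y rfl h).inv ▷ t.g y z h') ⊗≫
          ((ε x).hom ▷ (t.g x y h ⊗ t.g y z h') ≫ 𝟙_ C ◁ (t.γ x y z h h').hom) ⊗≫ 𝟙 _ := by
        monoidal
    _ = 𝟙 _ ⊗≫ gbar x ◁ ((t.γ x x y rfl h).inv ▷ t.g y z h') ⊗≫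
          ((gbar x ⊗ t.g x x rfl) ◁ (t.γ x y z h h').hom ≫
            (ε x).hom ▷ t.g x z (h.trans h')) ⊗≫ 𝟙 _ := by
        rw [← whisker_exchange]
    _ = 𝟙 _ ⊗≫ gbar x ◁ ((t.γ x x y rfl h).inv ▷ t.g y z h' ≫ (α_ _ _ _).hom ≫
          t.g x x rfl ◁ (t.γ x y z h h').hom) ⊗≫
          ((ε x).hom ▷ t.g x z (h.trans h')) ⊗≫ 𝟙 _ := by
        monoidal
    _ = 𝟙 _ ⊗≫ gbar x ◁ ((t.γ x y z h h').hom ≫ (t.γ x x z rfl (h.trans h')).inv) ⊗≫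
          ((ε x).hom ▷ t.g x z (h.trans h')) ⊗≫ 𝟙 _ := by
        rw [key]
    _ = (α_ (gbar x) (t.g x y h) (t.g y z h')).hom ≫ gbar x ◁ (t.γ x y z h h').hom ≫
          gbar x ◁ (t.γ x x z rfl (h.trans h')).inv ≫ (α_ _ _ _).inv ≫
          (ε x).hom ▷ t.g x z (h.trans h') ≫ (λ_ (t.g x z (h.trans h'))).hom := by
        monoidal

lemma e_mul' (x y z : U) (h : j x = j y) (h' : j y = j z) :
    gbar x ◁ (t.γ x y z h h').hom ≫ (eIso t gbar ε x z (h.trans h')).hom =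
      (α_ (gbar x) (t.g x y h) (t.g y z h')).inv ≫
        (eIso t gbar ε x y h).hom ▷ t.g y z h' ≫ (t.γ x y z h h').hom := by
  rw [e_mul]; simp

lemma sstrict_eq (x y z : U) (hxy : j x = j y) (hyz : j y = j z) :
    (sstrictIso t.g t.γ gbar ε x y z hxy hyz).hom =
      (α_ (t.g x y hxy) (gbar y) (t.g y z hyz ⊗ gbar z)).hom ≫
        t.g x y hxy ◁ ((α_ (gbar y) (t.g y z hyz) (gbar z)).inv ≫
          (eIso t gbar ε y z hyz).hom ▷ gbar z) ≫
        (α_ (t.g x y hxy) (t.g y z hyz) (gbar z)).inv ≫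
        (t.γ x y z hxy hyz).hom ▷ gbar z := by
  simp only [sstrictIso, eIso, Iso.trans_hom, Iso.symm_hom, whiskerLeftIso_hom,
    whiskerRightIso_hom, Category.assoc, MonoidalCategory.whiskerLeft_comp,
    comp_whiskerRight]
  monoidal

/- (A) σ-associativity for bB -/
lemma sigma1_assoc (x y z x' : U) (hxy : j x = j y) (hyz : j y = j z) (h₂ : j z = j x') :
    (t.γ x y z hxy hyz).hom ▷ (t.g z x' h₂ ⊗ gbar x') ≫
        (σ₁ t gbar x z x' (hxy.trans hyz) h₂).hom =
      (α_ (t.g x y hxy) (t.g y z hyz) (t.g z x' h₂ ⊗ gbar x')).hom ≫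
        t.g x y hxy ◁ (σ₁ t gbar y z x' hyz h₂).hom ≫
        (σ₁ t gbar x y x' hxy (hyz.trans h₂)).hom := by
  simp only [σ₁, Iso.trans_hom, Iso.symm_hom, whiskerRightIso_hom, Category.assoc]
  calc (t.γ x y z hxy hyz).hom ▷ (t.g z x' h₂ ⊗ gbar x') ≫ (α_ _ _ _).inv ≫
        (t.γ x z x' (hxy.trans hyz) h₂).hom ▷ gbar x'
      = 𝟙 _ ⊗≫ (((t.γ x y z hxy hyz).hom ▷ t.g z x' h₂ ≫
          (t.γ x z x' (hxy.trans hyz) h₂).hom) ▷ gbar x') ⊗≫ 𝟙 _ := by monoidal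
    _ = 𝟙 _ ⊗≫ (((α_ (t.g x y hxy) (t.g y z hyz) (t.g z x' h₂)).hom ≫
          t.g x y hxy ◁ (t.γ y z x' hyz h₂).hom ≫
          (t.γ x y x' hxy (hyz.trans h₂)).hom) ▷ gbar x') ⊗≫ 𝟙 _ := by
        rw [t.assoc x y z x' hxy hyz h₂]
    _ = (α_ (t.g x y hxy) (t.g y z hyz) (t.g z x' h₂ ⊗ gbar x')).hom ≫
          t.g x y hxy ◁ ((α_ _ _ _).inv ≫ (t.γ y z x' hyz h₂).hom ▷ gbar x') ≫
          (α_ _ _ _).inv ≫ (t.γ x y x' hxy (hyz.trans h₂)).hom ▷ gbar x' := by monoidal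

/- (B) σ-unit for bB -/
lemma sigma1_unit (x x' : U) (h : j x = j x') :
    (t.η x).hom ▷ (t.g x x' h ⊗ gbar x') ≫ (σ₁ t gbar x x x' rfl h).hom =
      (λ_ (t.g x x' h ⊗ gbar x')).hom := by
  simp only [σ₁, Iso.trans_hom, Iso.symm_hom, whiskerRightIso_hom, Category.assoc]
  calc (t.η x).hom ▷ (t.g x x' h ⊗ gbar x') ≫ (α_ _ _ _).inv ≫
        (t.γ x x x' rfl h).hom ▷ gbar x'
      = 𝟙 _ ⊗≫ (((t.η x).hom ▷ t.g x x' h ≫ (t.γ x x x' rfl h).hom) ▷ gbar x') ⊗≫ 𝟙 _ := by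
        monoidal
    _ = 𝟙 _ ⊗≫ ((λ_ (t.g x x' h)).hom ▷ gbar x') ⊗≫ 𝟙 _ := by rw [t.unit_left]
    _ = (λ_ (t.g x x' h ⊗ gbar x')).hom := by monoidal

/- (L1) σδ-compatibility for bB; also condition 4 for θ'. -/
lemma L1 (x y x' y' : U) (hxy : j x = j y) (h₁ : j y = j x') (h₂ : j x' = j y') :
    (σ₁ t gbar x y x' hxy h₁).hom ▷ (t.g x' y' h₂ ⊗ gbar y') ≫
        (sstrictIso t.g t.γ gbar ε x x' y' (hxy.trans h₁) h₂).hom =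
      (α_ (t.g x y hxy) (t.g y x' h₁ ⊗ gbar x') (t.g x' y' h₂ ⊗ gbar y')).hom ≫
        t.g x y hxy ◁ (sstrictIso t.g t.γ gbar ε y x' y' h₁ h₂).hom ≫
        (σ₁ t gbar x y y' hxy (h₁.trans h₂)).hom := by
  simp only [σ₁, sstrict_eq, Iso.trans_hom, Iso.symm_hom, whiskerRightIso_hom, Category.assoc]
  calc ((α_ _ _ _).inv ≫ (t.γ x y x' hxy h₁).hom ▷ gbar x') ▷ (t.g x' y' h₂ ⊗ gbar y') ≫
        (α_ _ _ _).hom ≫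
        t.g x x' (hxy.trans h₁) ◁ ((α_ _ _ _).inv ≫ (eIso t gbar ε x' y' h₂).hom ▷ gbar y') ≫
        (α_ _ _ _).inv ≫ (t.γ x x' y' (hxy.trans h₁) h₂).hom ▷ gbar y'
      = 𝟙 _ ⊗≫ ((t.γ x y x' hxy h₁).hom ▷ (gbar x' ⊗ (t.g x' y' h₂ ⊗ gbar y')) ≫
          t.g x x' (hxy.trans h₁) ◁ ((α_ (gbar x') (t.g x' y' h₂) (gbar y')).inv ≫
            (eIso t gbar ε x' y' h₂).hom ▷ gbar y')) ⊗≫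
          ((t.γ x x' y' (hxy.trans h₁) h₂).hom ▷ gbar y') ⊗≫ 𝟙 _ := by monoidal
    _ = 𝟙 _ ⊗≫ (((t.g x y hxy ⊗ t.g y x' h₁ : C)) ◁ ((α_ (gbar x') (t.g x' y' h₂) (gbar y')).inv ≫
            (eIso t gbar ε x' y' h₂).hom ▷ gbar y') ≫
          (t.γ x y x' hxy h₁).hom ▷ (t.g x' y' h₂ ⊗ gbar y')) ⊗≫
          ((t.γ x x' y' (hxy.trans h₁) h₂).hom ▷ gbar y') ⊗≫ 𝟙 _ := by
        rw [← whisker_exchange]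
    _ = 𝟙 _ ⊗≫ ((t.g x y hxy ⊗ t.g y x' h₁ : C)) ◁ ((α_ _ _ _).inv ≫
            (eIso t gbar ε x' y' h₂).hom ▷ gbar y') ⊗≫
          (((t.γ x y x' hxy h₁).hom ▷ t.g x' y' h₂ ≫
            (t.γ x x' y' (hxy.trans h₁) h₂).hom) ▷ gbar y') ⊗≫ 𝟙 _ := by monoidal
    _ = 𝟙 _ ⊗≫ ((t.g x y hxy ⊗ t.g y x' h₁ : C)) ◁ ((α_ _ _ _).inv ≫
            (eIso t gbar ε x' y' h₂).hom ▷ gbar y') ⊗≫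
          (((α_ (t.g x y hxy) (t.g y x' h₁) (t.g x' y' h₂)).hom ≫
            t.g x y hxy ◁ (t.γ y x' y' h₁ h₂).hom ≫
            (t.γ x y y' hxy (h₁.trans h₂)).hom) ▷ gbar y') ⊗≫ 𝟙 _ := by
        rw [t.assoc x y x' y' hxy h₁ h₂]
    _ = (α_ (t.g x y hxy) (t.g y x' h₁ ⊗ gbar x') (t.g x' y' h₂ ⊗ gbar y')).hom ≫
          t.g x y hxy ◁ ((α_ _ _ _).hom ≫
            t.g y x' h₁ ◁ ((α_ _ _ _).inv ≫ (eIso t gbar ε x' y' h₂).hom ▷ gbar y') ≫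
            (α_ _ _ _).inv ≫ (t.γ y x' y' h₁ h₂).hom ▷ gbar y') ≫
          (α_ _ _ _).inv ≫ (t.γ x y y' hxy (h₁.trans h₂)).hom ▷ gbar y' := by monoidal

/- (L2) σδ-compatibility for bB'; also condition 2 for θ. -/
lemma L2 (x y x' y' : U) (hxy : j x = j y) (h₁ : j y = j x') (h₂ : j x' = j y') :
    (σ₂ t gbar ε x y x' hxy h₁).hom ▷ t.g x' y' h₂ ≫
        (t.γ x x' y' (hxy.trans h₁) h₂).hom =
      (α_ (t.g x y hxy ⊗ gbar y) (t.g y x' h₁) (t.g x' y' h₂)).hom ≫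
        (t.g x y hxy ⊗ gbar y) ◁ (t.γ y x' y' h₁ h₂).hom ≫
        (σ₂ t gbar ε x y y' hxy (h₁.trans h₂)).hom := by
  simp only [σ₂, Iso.trans_hom, whiskerLeftIso_hom, Category.assoc, comp_whiskerRight]
  calc (α_ _ _ _).hom ▷ t.g x' y' h₂ ≫
        (t.g x y hxy ◁ (eIso t gbar ε y x' h₁).hom) ▷ t.g x' y' h₂ ≫
        (t.γ x y x' hxy h₁).hom ▷ t.g x' y' h₂ ≫ (t.γ x x' y' (hxy.trans h₁) h₂).hom
      = 𝟙 _ ⊗≫ t.g x y hxy ◁ ((eIso t gbar ε y x' h₁).hom ▷ t.g x' y' h₂) ⊗≫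
          ((t.γ x y x' hxy h₁).hom ▷ t.g x' y' h₂ ≫
            (t.γ x x' y' (hxy.trans h₁) h₂).hom) ⊗≫ 𝟙 _ := by monoidal
    _ = 𝟙 _ ⊗≫ t.g x y hxy ◁ ((eIso t gbar ε y x' h₁).hom ▷ t.g x' y' h₂) ⊗≫
          ((α_ (t.g x y hxy) (t.g y x' h₁) (t.g x' y' h₂)).hom ≫
            t.g x y hxy ◁ (t.γ y x' y' h₁ h₂).hom ≫
            (t.γ x y y' hxy (h₁.trans h₂)).hom) ⊗≫ 𝟙 _ := by
        rw [t.assoc x y x' y' hxy h₁ h₂]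
    _ = 𝟙 _ ⊗≫ t.g x y hxy ◁ ((eIso t gbar ε y x' h₁).hom ▷ t.g x' y' h₂ ≫
          (t.γ y x' y' h₁ h₂).hom) ⊗≫ (t.γ x y y' hxy (h₁.trans h₂)).hom ⊗≫ 𝟙 _ := by
        monoidal
    _ = 𝟙 _ ⊗≫ t.g x y hxy ◁ ((α_ (gbar y) (t.g y x' h₁) (t.g x' y' h₂)).hom ≫
          gbar y ◁ (t.γ y x' y' h₁ h₂).hom ≫ (eIso t gbar ε y y' (h₁.trans h₂)).hom) ⊗≫
          (t.γ x y y' hxy (h₁.trans h₂)).hom ⊗≫ 𝟙 _ := by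
        rw [e_mul]
    _ = (α_ (t.g x y hxy ⊗ gbar y) (t.g y x' h₁) (t.g x' y' h₂)).hom ≫
          (t.g x y hxy ⊗ gbar y) ◁ (t.γ y x' y' h₁ h₂).hom ≫
          (α_ _ _ _).hom ≫ t.g x y hxy ◁ (eIso t gbar ε y y' (h₁.trans h₂)).hom ≫
          (t.γ x y y' hxy (h₁.trans h₂)).hom := by monoidal

/- (L5) condition 1 for θ. -/
lemma L5 (x y x' z : U) (hxy : j x = j y) (h₁ : j y = j x') (h₂ : j x' = j z) :
    t.g x y hxy ◁ (σ₂ t gbar ε y x' z h₁ h₂).hom ≫ (t.γ x y z hxy (h₁.trans h₂)).hom =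
      (α_ (t.g x y hxy) (t.g y x' h₁ ⊗ gbar x') (t.g x' z h₂)).inv ≫
        (σ₁ t gbar x y x' hxy h₁).hom ▷ t.g x' z h₂ ≫
        (σ₂ t gbar ε x x' z (hxy.trans h₁) h₂).hom := by
  simp only [σ₁, σ₂, Iso.trans_hom, Iso.symm_hom, whiskerLeftIso_hom, whiskerRightIso_hom,
    Category.assoc, MonoidalCategory.whiskerLeft_comp]
  calc t.g x y hxy ◁ (α_ (t.g y x' h₁) (gbar x') (t.g x' z h₂)).hom ≫
        t.g x y hxy ◁ (t.g y x' h₁ ◁ (eIso t gbar ε x' z h₂).hom) ≫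
        t.g x y hxy ◁ (t.γ y x' z h₁ h₂).hom ≫ (t.γ x y z hxy (h₁.trans h₂)).hom
      = 𝟙 _ ⊗≫ t.g x y hxy ◁ (t.g y x' h₁ ◁ (eIso t gbar ε x' z h₂).hom) ⊗≫
          (t.g x y hxy ◁ (t.γ y x' z h₁ h₂).hom ≫ (t.γ x y z hxy (h₁.trans h₂)).hom) ⊗≫
          𝟙 _ := by monoidal
    _ = 𝟙 _ ⊗≫ t.g x y hxy ◁ (t.g y x' h₁ ◁ (eIso t gbar ε x' z h₂).hom) ⊗≫
          ((α_ (t.g x y hxy) (t.g y x' h₁) (t.g x' z h₂)).inv ≫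
            (t.γ x y x' hxy h₁).hom ▷ t.g x' z h₂ ≫
            (t.γ x x' z (hxy.trans h₁) h₂).hom) ⊗≫ 𝟙 _ := by
        rw [assoc₂ t x y x' z hxy h₁ h₂]
    _ = 𝟙 _ ⊗≫ (((t.g x y hxy ⊗ t.g y x' h₁ : C)) ◁ (eIso t gbar ε x' z h₂).hom ≫
          (t.γ x y x' hxy h₁).hom ▷ t.g x' z h₂) ⊗≫
          (t.γ x x' z (hxy.trans h₁) h₂).hom ⊗≫ 𝟙 _ := by monoidal
    _ = 𝟙 _ ⊗≫ ((t.γ x y x' hxy h₁).hom ▷ (gbar x' ⊗ t.g x' z h₂) ≫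
          t.g x x' (hxy.trans h₁) ◁ (eIso t gbar ε x' z h₂).hom) ⊗≫
          (t.γ x x' z (hxy.trans h₁) h₂).hom ⊗≫ 𝟙 _ := by rw [whisker_exchange]
    _ = (α_ (t.g x y hxy) (t.g y x' h₁ ⊗ gbar x') (t.g x' z h₂)).inv ≫
          ((α_ _ _ _).inv ≫ (t.γ x y x' hxy h₁).hom ▷ gbar x') ▷ t.g x' z h₂ ≫
          (α_ _ _ _).hom ≫ t.g x x' (hxy.trans h₁) ◁ (eIso t gbar ε x' z h₂).hom ≫
          (t.γ x x' z (hxy.trans h₁) h₂).hom := by monoidal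

/- (L6) condition 3 for θ'. -/
lemma L6 (x y x' z : U) (hxy : j x = j y) (h₁ : j y = j x') (h₂ : j x' = j z) :
    (t.g x y hxy ⊗ gbar y) ◁ (σ₁ t gbar y x' z h₁ h₂).hom ≫
        (sstrictIso t.g t.γ gbar ε x y z hxy (h₁.trans h₂)).hom =
      (α_ (t.g x y hxy ⊗ gbar y) (t.g y x' h₁) (t.g x' z h₂ ⊗ gbar z)).inv ≫
        (σ₂ t gbar ε x y x' hxy h₁).hom ▷ (t.g x' z h₂ ⊗ gbar z) ≫
        (σ₁ t gbar x x' z (hxy.trans h₁) h₂).hom := by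
  simp only [σ₁, σ₂, sstrict_eq, Iso.trans_hom, Iso.symm_hom, whiskerLeftIso_hom,
    whiskerRightIso_hom, Category.assoc]
  calc (t.g x y hxy ⊗ gbar y) ◁ ((α_ _ _ _).inv ≫ (t.γ y x' z h₁ h₂).hom ▷ gbar z) ≫
        (α_ _ _ _).hom ≫
        t.g x y hxy ◁ ((α_ _ _ _).inv ≫ (eIso t gbar ε y z (h₁.trans h₂)).hom ▷ gbar z) ≫
        (α_ _ _ _).inv ≫ (t.γ x y z hxy (h₁.trans h₂)).hom ▷ gbar z
      = 𝟙 _ ⊗≫ t.g x y hxy ◁ (((gbar y ◁ (t.γ y x' z h₁ h₂).hom ≫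
          (eIso t gbar ε y z (h₁.trans h₂)).hom)) ▷ gbar z) ⊗≫
          ((t.γ x y z hxy (h₁.trans h₂)).hom ▷ gbar z) ⊗≫ 𝟙 _ := by monoidal
    _ = 𝟙 _ ⊗≫ t.g x y hxy ◁ ((((α_ (gbar y) (t.g y x' h₁) (t.g x' z h₂)).inv ≫
          (eIso t gbar ε y x' h₁).hom ▷ t.g x' z h₂ ≫
          (t.γ y x' z h₁ h₂).hom)) ▷ gbar z) ⊗≫
          ((t.γ x y z hxy (h₁.trans h₂)).hom ▷ gbar z) ⊗≫ 𝟙 _ := by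
        rw [e_mul' t gbar ε y x' z h₁ h₂]
    _ = 𝟙 _ ⊗≫ (t.g x y hxy ◁ ((eIso t gbar ε y x' h₁).hom ▷ t.g x' z h₂)) ▷ gbar z ⊗≫
          ((t.g x y hxy ◁ (t.γ y x' z h₁ h₂).hom ≫
            (t.γ x y z hxy (h₁.trans h₂)).hom) ▷ gbar z) ⊗≫ 𝟙 _ := by monoidal
    _ = 𝟙 _ ⊗≫ (t.g x y hxy ◁ ((eIso t gbar ε y x' h₁).hom ▷ t.g x' z h₂)) ▷ gbar z ⊗≫
          (((α_ (t.g x y hxy) (t.g y x' h₁) (t.g x' z h₂)).inv ≫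
            (t.γ x y x' hxy h₁).hom ▷ t.g x' z h₂ ≫
            (t.γ x x' z (hxy.trans h₁) h₂).hom) ▷ gbar z) ⊗≫ 𝟙 _ := by
        rw [assoc₂ t x y x' z hxy h₁ h₂]
    _ = (α_ (t.g x y hxy ⊗ gbar y) (t.g y x' h₁) (t.g x' z h₂ ⊗ gbar z)).inv ≫
          ((α_ _ _ _).hom ≫ t.g x y hxy ◁ (eIso t gbar ε y x' h₁).hom ≫
            (t.γ x y x' hxy h₁).hom) ▷ (t.g x' z h₂ ⊗ gbar z) ≫
          (α_ _ _ _).inv ≫ (t.γ x x' z (hxy.trans h₁) h₂).hom ▷ gbar z := by monoidal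

/- (L3) σ-associativity for bB'. -/
lemma L3 (x y z x' : U) (hxy : j x = j y) (h₁ : j y = j z) (h₂ : j z = j x') :
    (sstrictIso t.g t.γ gbar ε x y z hxy h₁).hom ▷ t.g z x' h₂ ≫
        (σ₂ t gbar ε x z x' (hxy.trans h₁) h₂).hom =
      (α_ (t.g x y hxy ⊗ gbar y) (t.g y z h₁ ⊗ gbar z) (t.g z x' h₂)).hom ≫
        (t.g x y hxy ⊗ gbar y) ◁ (σ₂ t gbar ε y z x' h₁ h₂).hom ≫
        (σ₂ t gbar ε x y x' hxy (h₁.trans h₂)).hom := by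
  simp only [σ₂, sstrict_eq, Iso.trans_hom, Iso.symm_hom, whiskerLeftIso_hom,
    whiskerRightIso_hom, Category.assoc, comp_whiskerRight, MonoidalCategory.whiskerLeft_comp]
  calc (α_ _ _ _).hom ▷ t.g z x' h₂ ≫
        (t.g x y hxy ◁ (α_ (gbar y) (t.g y z h₁) (gbar z)).inv) ▷ t.g z x' h₂ ≫
        (t.g x y hxy ◁ (eIso t gbar ε y z h₁).hom ▷ gbar z) ▷ t.g z x' h₂ ≫
        (α_ (t.g x y hxy) (t.g y z h₁) (gbar z)).inv ▷ t.g z x' h₂ ≫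
        (t.γ x y z hxy h₁).hom ▷ gbar z ▷ t.g z x' h₂ ≫
        (α_ _ _ _).hom ≫ t.g x z (hxy.trans h₁) ◁ (eIso t gbar ε z x' h₂).hom ≫
        (t.γ x z x' (hxy.trans h₁) h₂).hom
      = 𝟙 _ ⊗≫ ((t.g x y hxy ◁ (eIso t gbar ε y z h₁).hom ≫ (t.γ x y z hxy h₁).hom) ▷
            (gbar z ⊗ t.g z x' h₂) ≫
          t.g x z (hxy.trans h₁) ◁ (eIso t gbar ε z x' h₂).hom) ⊗≫
          (t.γ x z x' (hxy.trans h₁) h₂).hom ⊗≫ 𝟙 _ := by monoidal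
    _ = 𝟙 _ ⊗≫ (((t.g x y hxy ⊗ (gbar y ⊗ t.g y z h₁) : C)) ◁ (eIso t gbar ε z x' h₂).hom ≫
          (t.g x y hxy ◁ (eIso t gbar ε y z h₁).hom ≫ (t.γ x y z hxy h₁).hom) ▷
            t.g z x' h₂) ⊗≫ (t.γ x z x' (hxy.trans h₁) h₂).hom ⊗≫ 𝟙 _ := by
        rw [← whisker_exchange]
    _ = 𝟙 _ ⊗≫ ((t.g x y hxy ⊗ (gbar y ⊗ t.g y z h₁) : C)) ◁ (eIso t gbar ε z x' h₂).hom ⊗≫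
          t.g x y hxy ◁ ((eIso t gbar ε y z h₁).hom ▷ t.g z x' h₂) ⊗≫
          ((t.γ x y z hxy h₁).hom ▷ t.g z x' h₂ ≫
            (t.γ x z x' (hxy.trans h₁) h₂).hom) ⊗≫ 𝟙 _ := by monoidal
    _ = 𝟙 _ ⊗≫ ((t.g x y hxy ⊗ (gbar y ⊗ t.g y z h₁) : C)) ◁ (eIso t gbar ε z x' h₂).hom ⊗≫
          t.g x y hxy ◁ ((eIso t gbar ε y z h₁).hom ▷ t.g z x' h₂) ⊗≫
          ((α_ (t.g x y hxy) (t.g y z h₁) (t.g z x' h₂)).hom ≫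
            t.g x y hxy ◁ (t.γ y z x' h₁ h₂).hom ≫
            (t.γ x y x' hxy (h₁.trans h₂)).hom) ⊗≫ 𝟙 _ := by
        rw [t.assoc x y z x' hxy h₁ h₂]
    _ = 𝟙 _ ⊗≫ ((t.g x y hxy ⊗ (gbar y ⊗ t.g y z h₁) : C)) ◁ (eIso t gbar ε z x' h₂).hom ⊗≫
          t.g x y hxy ◁ ((eIso t gbar ε y z h₁).hom ▷ t.g z x' h₂ ≫
            (t.γ y z x' h₁ h₂).hom) ⊗≫ (t.γ x y x' hxy (h₁.trans h₂)).hom ⊗≫ 𝟙 _ := by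
        monoidal
    _ = 𝟙 _ ⊗≫ ((t.g x y hxy ⊗ (gbar y ⊗ t.g y z h₁) : C)) ◁ (eIso t gbar ε z x' h₂).hom ⊗≫
          t.g x y hxy ◁ ((α_ (gbar y) (t.g y z h₁) (t.g z x' h₂)).hom ≫
            gbar y ◁ (t.γ y z x' h₁ h₂).hom ≫ (eIso t gbar ε y x' (h₁.trans h₂)).hom) ⊗≫
          (t.γ x y x' hxy (h₁.trans h₂)).hom ⊗≫ 𝟙 _ := by
        rw [e_mul t gbar ε y z x' h₁ h₂]
    _ = (α_ (t.g x y hxy ⊗ gbar y) (t.g y z h₁ ⊗ gbar z) (t.g z x' h₂)).hom ≫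
          ((t.g x y hxy ⊗ gbar y : C)) ◁ (α_ (t.g y z h₁) (gbar z) (t.g z x' h₂)).hom ≫
          ((t.g x y hxy ⊗ gbar y : C)) ◁ (t.g y z h₁ ◁ (eIso t gbar ε z x' h₂).hom) ≫
          ((t.g x y hxy ⊗ gbar y : C)) ◁ (t.γ y z x' h₁ h₂).hom ≫
          (α_ _ _ _).hom ≫ t.g x y hxy ◁ (eIso t gbar ε y x' (h₁.trans h₂)).hom ≫
          (t.γ x y x' hxy (h₁.trans h₂)).hom := by monoidal

/- (L4) σ-unit for bB'. -/
lemma L4 (x x' : U) (h : j x = j x') (ι : 𝟙_ C ≅ t.g x x rfl ⊗ gbar x)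
    (zig : (λ_ (t.g x x rfl)).inv ≫ ι.hom ▷ t.g x x rfl ≫
      (α_ (t.g x x rfl) (gbar x) (t.g x x rfl)).hom ≫ t.g x x rfl ◁ (ε x).hom ≫
      (ρ_ (t.g x x rfl)).hom = 𝟙 (t.g x x rfl)) :
    ι.hom ▷ t.g x x' h ≫ (σ₂ t gbar ε x x x' rfl h).hom = (λ_ (t.g x x' h)).hom := by
  simp only [σ₂, eIso, Iso.trans_hom, Iso.symm_hom, whiskerLeftIso_hom, whiskerRightIso_hom,
    Category.assoc, MonoidalCategory.whiskerLeft_comp]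
  calc ι.hom ▷ t.g x x' h ≫ (α_ _ _ _).hom ≫
        t.g x x rfl ◁ (gbar x ◁ (t.γ x x x' rfl h).inv) ≫
        t.g x x rfl ◁ (α_ _ _ _).inv ≫ t.g x x rfl ◁ ((ε x).hom ▷ t.g x x' h) ≫
        t.g x x rfl ◁ (λ_ (t.g x x' h)).hom ≫ (t.γ x x x' rfl h).hom
      = 𝟙 _ ⊗≫ (ι.hom ▷ t.g x x' h ≫
          ((t.g x x rfl ⊗ gbar x : C)) ◁ (t.γ x x x' rfl h).inv) ⊗≫
          t.g x x rfl ◁ ((α_ (gbar x) (t.g x x rfl) (t.g x x' h)).inv ≫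
            (ε x).hom ▷ t.g x x' h) ⊗≫ (t.γ x x x' rfl h).hom ⊗≫ 𝟙 _ := by monoidal
    _ = 𝟙 _ ⊗≫ (𝟙_ C ◁ (t.γ x x x' rfl h).inv ≫
          ι.hom ▷ (t.g x x rfl ⊗ t.g x x' h)) ⊗≫
          t.g x x rfl ◁ ((α_ (gbar x) (t.g x x rfl) (t.g x x' h)).inv ≫
            (ε x).hom ▷ t.g x x' h) ⊗≫ (t.γ x x x' rfl h).hom ⊗≫ 𝟙 _ := by
        rw [← whisker_exchange]
    _ = 𝟙 _ ⊗≫ 𝟙_ C ◁ (t.γ x x x' rfl h).inv ⊗≫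
          (((λ_ (t.g x x rfl)).inv ≫ ι.hom ▷ t.g x x rfl ≫
            (α_ (t.g x x rfl) (gbar x) (t.g x x rfl)).hom ≫ t.g x x rfl ◁ (ε x).hom ≫
            (ρ_ (t.g x x rfl)).hom) ▷ t.g x x' h) ⊗≫ (t.γ x x x' rfl h).hom ⊗≫ 𝟙 _ := by
        monoidal
    _ = 𝟙 _ ⊗≫ 𝟙_ C ◁ (t.γ x x x' rfl h).inv ⊗≫ (𝟙 (t.g x x rfl) ▷ t.g x x' h) ⊗≫
          (t.γ x x x' rfl h).hom ⊗≫ 𝟙 _ := by rw [zig]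
    _ = 𝟙 _ ⊗≫ (𝟙_ C ◁ (t.γ x x x' rfl h).inv ≫ 𝟙_ C ◁ (t.γ x x x' rfl h).hom) ⊗≫ 𝟙 _ := by
        monoidal
    _ = (λ_ (t.g x x' h)).hom := by
        rw [← MonoidalCategory.whiskerLeft_comp, Iso.inv_hom_id,
          MonoidalCategory.whiskerLeft_id]
        monoidal

end SS17

/-- STATEMENT 17: a 2-transition `(g, γ, η)` is equivalent to its semistrictification
`(g', γ', η')`: with `b x y := g x y ⊗ ḡ y` and `b' x y := g x y` there are actor data
making `b : g → g'` and `b' : g' → g` 2-transition morphisms, together with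
isomorphisms `b x x' ⊗ b' x' y ≅ g x y` and `b' x x' ⊗ b x' y ≅ g' x y` intertwining
the `σ`/`δ` data with `γ` and `γ'` (i.e. invertible 2-transition 2-morphisms from the
composites `b;b'` and `b';b` to the identity 2-transition morphisms of `g`, `g'`). -/
theorem stmt17 (t : TwoTransition C j) (gbar : U → C)
    (ι : ∀ x : U, 𝟙_ C ≅ t.g x x rfl ⊗ gbar x)
    (ε : ∀ x : U, gbar x ⊗ t.g x x rfl ≅ 𝟙_ C)
    (zig₁ : ∀ x : U,
      (λ_ (t.g x x rfl)).inv ≫ (ι x).hom ▷ t.g x x rfl ≫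
        (α_ (t.g x x rfl) (gbar x) (t.g x x rfl)).hom ≫ t.g x x rfl ◁ (ε x).hom ≫
        (ρ_ (t.g x x rfl)).hom = 𝟙 (t.g x x rfl))
    (zig₂ : ∀ x : U,
      (ρ_ (gbar x)).inv ≫ gbar x ◁ (ι x).hom ≫
        (α_ (gbar x) (t.g x x rfl) (gbar x)).inv ≫ (ε x).hom ▷ gbar x ≫
        (λ_ (gbar x)).hom = 𝟙 (gbar x))
    (t' : TwoTransition C j)
    (hg' : t'.g = fun (x y : U) (h : j x = j y) => t.g x y h ⊗ gbar y)
    (hγ' : HEq t'.γ (fun (x y z : U) (hxy : j x = j y) (hyz : j y = j z) =>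
      sstrictIso t.g t.γ gbar ε x y z hxy hyz))
    (hη' : HEq t'.η ι) :
    ∃ (bB : TwoTransMor t t') (bB' : TwoTransMor t' t),
      (bB.b = fun (x x' : U) (h : j x = j x') => t.g x x' h ⊗ gbar x') ∧
      (bB'.b = fun (x x' : U) (h : j x = j x') => t.g x x' h) ∧
      ∃ (θ : ∀ (x x' y : U) (h₁ : j x = j x') (h₂ : j x' = j y),
          bB.b x x' h₁ ⊗ bB'.b x' y h₂ ≅ t.g x y (h₁.trans h₂))
        (θ' : ∀ (x x' y : U) (h₁ : j x = j x') (h₂ : j x' = j y),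
          bB'.b x x' h₁ ⊗ bB.b x' y h₂ ≅ t'.g x y (h₁.trans h₂)),
        (∀ (x y x' z : U) (hxy : j x = j y) (h₁ : j y = j x') (h₂ : j x' = j z),
          t.g x y hxy ◁ (θ y x' z h₁ h₂).hom ≫ (t.γ x y z hxy (h₁.trans h₂)).hom =
            (α_ (t.g x y hxy) (bB.b y x' h₁) (bB'.b x' z h₂)).inv ≫
              (bB.σ x y x' hxy h₁).hom ▷ bB'.b x' z h₂ ≫
              (θ x x' z (hxy.trans h₁) h₂).hom) ∧
        (∀ (x x' y z : U) (h₁ : j x = j x') (h₂ : j x' = j y) (hyz : j y = j z),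
          (θ x x' y h₁ h₂).hom ▷ t.g y z hyz ≫ (t.γ x y z (h₁.trans h₂) hyz).hom =
            (α_ (bB.b x x' h₁) (bB'.b x' y h₂) (t.g y z hyz)).hom ≫
              bB.b x x' h₁ ◁ (bB'.δ x' y z h₂ hyz).hom ≫
              (θ x x' z h₁ (h₂.trans hyz)).hom) ∧
        (∀ (x y x' z : U) (hxy : j x = j y) (h₁ : j y = j x') (h₂ : j x' = j z),
          t'.g x y hxy ◁ (θ' y x' z h₁ h₂).hom ≫ (t'.γ x y z hxy (h₁.trans h₂)).hom =
            (α_ (t'.g x y hxy) (bB'.b y x' h₁) (bB.b x' z h₂)).inv ≫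
              (bB'.σ x y x' hxy h₁).hom ▷ bB.b x' z h₂ ≫
              (θ' x x' z (hxy.trans h₁) h₂).hom) ∧
        (∀ (x x' y z : U) (h₁ : j x = j x') (h₂ : j x' = j y) (hyz : j y = j z),
          (θ' x x' y h₁ h₂).hom ▷ t'.g y z hyz ≫ (t'.γ x y z (h₁.trans h₂) hyz).hom =
            (α_ (bB'.b x x' h₁) (bB.b x' y h₂) (t'.g y z hyz)).hom ≫
              bB'.b x x' h₁ ◁ (bB.δ x' y z h₂ hyz).hom ≫
              (θ' x x' z h₁ (h₂.trans hyz)).hom) := by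
  
  obtain ⟨g', γ', η', assoc', ul', ur'⟩ := t'
  dsimp only at hg' hγ' hη'
  subst hg'
  have hγ'' := eq_of_heq hγ'
  subst hγ''
  have hη'' := eq_of_heq hη'
  subst hη''
  refine ⟨⟨fun x x' hx => t.g x x' hx ⊗ gbar x',
      fun x y x' hxy h₁ => SS17.σ₁ t gbar x y x' hxy h₁,
      fun x x' y' h h' => sstrictIso t.g t.γ gbar ε x x' y' h h',
      fun x y z x' hxy hyz h₂ => SS17.sigma1_assoc t gbar x y z x' hxy hyz h₂,
      fun x x' h => SS17.sigma1_unit t gbar x x' h,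
      assoc', ur',
      fun x y x' y' hxy h₁ h₂ => SS17.L1 t gbar ε x y x' y' hxy h₁ h₂⟩,
    ⟨fun x x' hx => t.g x x' hx,
      fun x y x' hxy h₁ => SS17.σ₂ t gbar ε x y x' hxy h₁,
      fun x x' y' h h' => t.γ x x' y' h h',
      fun x y z x' hxy hyz h₂ => SS17.L3 t gbar ε x y z x' hxy hyz h₂,
      fun x x' h => SS17.L4 t gbar ε x x' h (η' x) (zig₁ x),
      fun x x' y' z' h h' h'' => t.assoc x x' y' z' h h' h'',
      fun x x' h => t.unit_right x x' h,
      fun x y x' y' hxy h₁ h₂ => SS17.L2 t gbar ε x y x' y' hxy h₁ h₂⟩,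
    rfl, rfl,
    fun x x' y h₁ h₂ => SS17.σ₂ t gbar ε x x' y h₁ h₂,
    fun x x' y h₁ h₂ => SS17.σ₁ t gbar x x' y h₁ h₂,
    fun x y x' z hxy h₁ h₂ => SS17.L5 t gbar ε x y x' z hxy h₁ h₂,
    fun x x' y z h₁ h₂ hyz => SS17.L2 t gbar ε x x' y z h₁ h₂ hyz,
    fun x y x' z hxy h₁ h₂ => SS17.L6 t gbar ε x y x' z hxy h₁ h₂,
    fun x x' y z h₁ h₂ hyz => SS17.L1 t gbar ε x x' y z h₁ h₂ hyz⟩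
end
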